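/- arXiv:1804.08980 — 7 statements merged into one kernel-verified Lean document; each statement's English description precedes it below -/
import Mathlib

section
/- Let (X,𝒳) and (Y,𝒴) be standard Borel spaces, let X be a random variable with distribution μ_X on X, and let ρ : X × Y → [0,∞] be a measurable distortion function such that (i) inf_{y∈Y} ρ(x,y) = 0 for all x ∈ X, and (ii) there exists a finite set B ⊆ Y with E[min_{y∈B} ρ(X,y)] < ∞. Suppose μ is a σ-finite measure on (X,𝒳) with μ_X ≪ μ and such that the generalized entropy h_μ(X) := −∫ log(dμ_X/dμ)(x) dμ_X(x) is finite. Define ν(s) := sup_{y∈Y} ∫ e^{−s ρ(x,y)} dμ(x) for s ≥ 0, the rate-distortion function R(D) := inf { I(π) : π a probability measure on X × Y with first marginal μ_X and ∫ ρ dπ ≤ D }, where I(π) is the Kullback–Leibler divergence of π with respect to the product of its two marginals (with I(π) = ∞ if π is not absolutely continuous with respect to this product), and D₀ := inf{ D ≥ 0 : R(D) < ∞ }. Then for every D ∈ (D₀, ∞), R(D) ≥ h_μ(X) − inf_{s ≥ 0} ( s·D + log ν(s) ). -/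
open MeasureTheory Real Set
open scoped ENNReal NNReal Classical

/-- `expNeg u = e^{-u}` for `u ∈ [0,∞]`, with `e^{-∞} = 0`. -/
noncomputable def expNeg (u : ℝ≥0∞) : ℝ≥0∞ :=
  if u = ⊤ then 0 else ENNReal.ofReal (Real.exp (-u.toReal))

/-- The mutual information `I(P)` of a coupling `P`, i.e. the Kullback–Leibler divergence of
`P` with respect to the product of its two marginals: `∫ log(dP/d(P₁ ⊗ P₂)) dP` if `P` is
absolutely continuous with respect to `P₁ ⊗ P₂` (and the log-density is `P`-integrable, which
for couplings always holds when the divergence is finite), and `∞` otherwise. -/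
noncomputable def mutualInfo {α β : Type*} [MeasurableSpace α] [MeasurableSpace β]
    (P : Measure (α × β)) : EReal :=
  if P ≪ P.fst.prod P.snd ∧
      Integrable (fun p => Real.log (P.rnDeriv (P.fst.prod P.snd) p).toReal) P
  then ((∫ p, Real.log (P.rnDeriv (P.fst.prod P.snd) p).toReal ∂P : ℝ) : EReal)
  else ⊤

/-- The rate-distortion function
`R(D) = inf { I(P) : P prob. measure on X × Y, first marginal μX, ∫ ρ dP ≤ D }`. -/
noncomputable def RD {α β : Type*} [MeasurableSpace α] [MeasurableSpace β]
    (μX : Measure α) (ρ : α → β → ℝ≥0∞) (D : ℝ) : EReal :=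
  ⨅ (P : Measure (α × β)) (_ : IsProbabilityMeasure P) (_ : P.fst = μX)
    (_ : ∫⁻ p, ρ p.1 p.2 ∂P ≤ ENNReal.ofReal D), mutualInfo P

/-! For a coupling `P` with first marginal `μX`, tilt `Q = P₁ ⊗ P₂` by
`f(x, y) = -log (dμX/dμ)(x) - s ρ(x, y)`. Gibbs' inequality against the tilted measure (the
Donsker–Varadhan inequality) gives `I(P) ≥ ∫ f dP - log ∫ e^f dQ`. Here `∫ f dP ≥ h - s D`, and
the density `(dμX/dμ)⁻¹` in `e^f` converts the inner integral over `μX` into one over `μ`, so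
`∫ e^f dQ ≤ sup_y ∫ e^{-s ρ(x, y)} dμ(x) = ν(s)`. -/

section KullbackLeibler

variable {α : Type*} [MeasurableSpace α] {P Q : Measure α}

lemma MeasureTheory.Measure.AbsolutelyContinuous.neZero [NeZero P] (hPQ : P ≪ Q) :
    NeZero Q :=
  ⟨fun hQ ↦ NeZero.ne P (Measure.absolutelyContinuous_zero_iff.mp (hQ ▸ hPQ))⟩

lemma absolutelyContinuous_restrict_of_ae_mem {A : Set α} (hPQ : P ≪ Q)
    (hPA : ∀ᵐ x ∂P, x ∈ A) : P ≪ Q.restrict A := by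
  rw [← Measure.restrict_eq_self_of_ae_mem hPA]
  exact hPQ.restrict A

lemma llr_restrict_ae_eq [SigmaFinite P] [SigmaFinite Q] {A : Set α} (hA : MeasurableSet A)
    (hPQ : P ≪ Q) (hPA : ∀ᵐ x ∂P, x ∈ A) : llr P (Q.restrict A) =ᵐ[P] llr P Q := by
  have hP : P = (Q.restrict A).withDensity (P.rnDeriv Q) := by
    rw [← restrict_withDensity hA, Measure.withDensity_rnDeriv_eq P Q hPQ,
      Measure.restrict_eq_self_of_ae_mem hPA]
  have hrn : P.rnDeriv (Q.restrict A) =ᵐ[Q.restrict A] P.rnDeriv Q := by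
    nth_rewrite 1 [hP]
    exact Measure.rnDeriv_withDensity _ (Measure.measurable_rnDeriv P Q)
  filter_upwards [(absolutelyContinuous_restrict_of_ae_mem hPQ hPA).ae_le hrn] with x hx
  simp only [llr, hx]

lemma lintegral_ofReal_exp_neg_llr_mul_le [SigmaFinite P] [SigmaFinite Q] (hPQ : P ≪ Q)
    {g : α → ℝ≥0∞} (hg : Measurable g) :
    ∫⁻ x, ENNReal.ofReal (exp (-llr P Q x)) * g x ∂P ≤ ∫⁻ x, g x ∂Q := by
  nth_rewrite 1 [← Measure.withDensity_rnDeriv_eq P Q hPQ]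
  rw [lintegral_withDensity_eq_lintegral_mul _ (Measure.measurable_rnDeriv P Q) (by fun_prop)]
  refine lintegral_mono_ae ?_
  filter_upwards [Measure.rnDeriv_lt_top P Q] with x hx
  rcases eq_or_ne (P.rnDeriv Q x) 0 with h0 | h0
  · simp [h0]
  have hexp : ENNReal.ofReal (exp (-llr P Q x)) = (P.rnDeriv Q x)⁻¹ := by
    rw [llr, exp_neg, exp_log (ENNReal.toReal_pos h0 hx.ne), ENNReal.ofReal_inv_of_pos
      (ENNReal.toReal_pos h0 hx.ne), ENNReal.ofReal_toReal hx.ne]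
  simp only [Pi.mul_apply]
  rw [hexp, ← mul_assoc, ENNReal.mul_inv_cancel h0 hx.ne, one_mul]

variable [IsProbabilityMeasure P] [SigmaFinite Q] {f : α → ℝ}

/-- Donsker–Varadhan: Gibbs' inequality for `P` against the tilted measure `Q.tilted f`. -/
lemma coe_integral_sub_integral_llr_le_log_lintegral_exp (hPQ : P ≪ Q) (hf : Measurable f)
    (hfP : Integrable f P) (h_int : Integrable (llr P Q) P) :
    ((∫ x, f x ∂P - ∫ x, llr P Q x ∂P : ℝ) : EReal) ≤
      ENNReal.log (∫⁻ x, ENNReal.ofReal (exp (f x)) ∂Q) := by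
  by_cases hZ : ∫⁻ x, ENNReal.ofReal (exp (f x)) ∂Q = ⊤
  · simp [hZ]
  have hfQ : Integrable (fun x ↦ exp (f x)) Q :=
    ⟨hf.exp.aestronglyMeasurable, (hasFiniteIntegral_iff_ofReal
      (ae_of_all _ fun x ↦ (exp_pos _).le)).2 (lt_top_iff_ne_top.2 hZ)⟩
  have := hPQ.neZero
  have := isProbabilityMeasure_tilted hfQ
  have hgibbs := InformationTheory.integral_llr_add_sub_measure_univ_nonneg
    (hPQ.trans (absolutelyContinuous_tilted hfQ)) (integrable_llr_tilted_right hPQ hfP h_int hfQ)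
  rw [integral_llr_tilted_right hPQ hfP hfQ h_int] at hgibbs
  simp only [probReal_univ] at hgibbs
  rw [← ofReal_integral_eq_lintegral_ofReal hfQ (ae_of_all _ fun x ↦ (exp_pos _).le),
    ENNReal.log_ofReal_of_pos (integral_exp_pos hfQ)]
  exact_mod_cast (by linarith)

lemma coe_integral_sub_integral_llr_le_log_setLIntegral_exp {A : Set α} (hA : MeasurableSet A)
    (hPQ : P ≪ Q) (hPA : ∀ᵐ x ∂P, x ∈ A) (hf : Measurable f) (hfP : Integrable f P)
    (h_int : Integrable (llr P Q) P) :
    ((∫ x, f x ∂P - ∫ x, llr P Q x ∂P : ℝ) : EReal) ≤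
      ENNReal.log (∫⁻ x in A, ENNReal.ofReal (exp (f x)) ∂Q) := by
  have hllr := llr_restrict_ae_eq hA hPQ hPA
  rw [← integral_congr_ae hllr]
  exact coe_integral_sub_integral_llr_le_log_lintegral_exp
    (absolutelyContinuous_restrict_of_ae_mem hPQ hPA) hf hfP ((integrable_congr hllr).2 h_int)

end KullbackLeibler

section Marginal

variable {α β : Type*} [MeasurableSpace α] [MeasurableSpace β] {P : Measure (α × β)}
  {μ : Measure α} {g : α → ℝ}

lemma integrable_comp_fst_of_fst_eq (hfst : P.fst = μ) (hg : StronglyMeasurable g)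
    (hint : Integrable g μ) : Integrable (fun p ↦ g p.1) P := by
  subst hfst
  exact (integrable_map_measure hg.aestronglyMeasurable measurable_fst.aemeasurable).1 hint

lemma integral_comp_fst_of_fst_eq (hfst : P.fst = μ) (hg : StronglyMeasurable g) :
    ∫ p, g p.1 ∂P = ∫ x, g x ∂μ := by
  subst hfst
  exact (integral_map measurable_fst.aemeasurable hg.aestronglyMeasurable).symm

end Marginal

@[fun_prop]
lemma measurable_expNeg : Measurable expNeg :=
  Measurable.ite (measurableSet_singleton ⊤) measurable_const
    ENNReal.measurable_toReal.neg.exp.ennreal_ofReal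

lemma expNeg_ofReal_mul {s : ℝ} (hs : 0 ≤ s) {r : ℝ≥0∞} (hr : r ≠ ⊤) :
    expNeg (ENNReal.ofReal s * r) = ENNReal.ofReal (exp (-(s * r.toReal))) := by
  rw [expNeg, if_neg (ENNReal.mul_ne_top ENNReal.ofReal_ne_top hr), ENNReal.toReal_mul,
    ENNReal.toReal_ofReal hs]

section Distortion

variable {X Y : Type*} [MeasurableSpace X] [MeasurableSpace Y] {μX μ : Measure X}
  {ρ : X → Y → ℝ≥0∞}

lemma setLIntegral_exp_neg_llr_sub_le_iSup [SigmaFinite μX] [SigmaFinite μ] (hac : μX ≪ μ)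
    (hρ : Measurable fun p : X × Y ↦ ρ p.1 p.2) (η : Measure Y) [IsProbabilityMeasure η]
    {s : ℝ} (hs : 0 ≤ s) :
    ∫⁻ p in {p : X × Y | ρ p.1 p.2 ≠ ⊤},
        ENNReal.ofReal (exp (-llr μX μ p.1 - s * (ρ p.1 p.2).toReal)) ∂(μX.prod η) ≤
      ⨆ y, ∫⁻ x, expNeg (ENNReal.ofReal s * ρ x y) ∂μ := by
  set g : X × Y → ℝ≥0∞ :=
    fun p ↦ ENNReal.ofReal (exp (-llr μX μ p.1)) * expNeg (ENNReal.ofReal s * ρ p.1 p.2)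
  have hg : Measurable g := by fun_prop
  calc _ = ∫⁻ p in {p : X × Y | ρ p.1 p.2 ≠ ⊤}, g p ∂(μX.prod η) := by
        refine setLIntegral_congr_fun (hρ (measurableSet_singleton ⊤)).compl fun p hp ↦ ?_
        simp only [g]
        rw [expNeg_ofReal_mul hs hp, sub_eq_add_neg, exp_add, ENNReal.ofReal_mul (exp_pos _).le]
    _ ≤ ∫⁻ p, g p ∂(μX.prod η) := setLIntegral_le_lintegral _ _
    _ = ∫⁻ y, ∫⁻ x, g (x, y) ∂μX ∂η := lintegral_prod_symm' _ hg
    _ ≤ ∫⁻ _, ⨆ y, ∫⁻ x, expNeg (ENNReal.ofReal s * ρ x y) ∂μ ∂η := by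
        refine lintegral_mono fun y ↦ (lintegral_ofReal_exp_neg_llr_mul_le hac ?_).trans
          (le_iSup (fun y ↦ ∫⁻ x, expNeg (ENNReal.ofReal s * ρ x y) ∂μ) y)
        fun_prop
    _ = ⨆ y, ∫⁻ x, expNeg (ENNReal.ofReal s * ρ x y) ∂μ := by simp

lemma coe_neg_integral_llr_sub_integral_llr_le [SigmaFinite μ] (hac : μX ≪ μ)
    (hint : Integrable (llr μX μ) μX) (hρ : Measurable fun p : X × Y ↦ ρ p.1 p.2)
    {P : Measure (X × Y)} [IsProbabilityMeasure P] (hfst : P.fst = μX)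
    (hPQ : P ≪ P.fst.prod P.snd) (hPint : Integrable (llr P (P.fst.prod P.snd)) P)
    {s D : ℝ} (hs : 0 ≤ s) (hD : 0 ≤ D) (hρP : ∫⁻ p, ρ p.1 p.2 ∂P ≤ ENNReal.ofReal D) :
    ((-∫ x, llr μX μ x ∂μX - ∫ p, llr P (P.fst.prod P.snd) p ∂P : ℝ) : EReal) ≤
      ((s * D : ℝ) : EReal) + ENNReal.log (⨆ y, ∫⁻ x, expNeg (ENNReal.ofReal s * ρ x y) ∂μ) := by
  have : IsProbabilityMeasure μX := hfst ▸ inferInstance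
  set f : X × Y → ℝ := fun p ↦ -llr μX μ p.1 - s * (ρ p.1 p.2).toReal
  have hρ_fin : ∫⁻ p, ρ p.1 p.2 ∂P ≠ ⊤ := ne_top_of_le_ne_top ENNReal.ofReal_ne_top hρP
  have hllr_int := integrable_comp_fst_of_fst_eq hfst (stronglyMeasurable_llr μX μ) hint
  have hρ_int : Integrable (fun p ↦ (ρ p.1 p.2).toReal) P :=
    integrable_toReal_of_lintegral_ne_top hρ.aemeasurable hρ_fin
  have hρ_le : ∫ p, (ρ p.1 p.2).toReal ∂P ≤ D := by
    rw [integral_toReal hρ.aemeasurable (ae_lt_top hρ hρ_fin)]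
    exact ENNReal.toReal_le_of_le_ofReal hD hρP
  have hf_ge : -∫ x, llr μX μ x ∂μX - s * D ≤ ∫ p, f p ∂P := by
    rw [integral_sub hllr_int.fun_neg (hρ_int.const_mul s), integral_neg, integral_const_mul,
      integral_comp_fst_of_fst_eq hfst (stronglyMeasurable_llr μX μ)]
    linarith [mul_le_mul_of_nonneg_left hρ_le hs]
  -- On `{ρ = ∞}` the junk value `toReal ⊤ = 0` would give `e^f` the wrong value; `P` does not
  -- charge this set, so it is cut out of `Q`.
  have hDV := coe_integral_sub_integral_llr_le_log_setLIntegral_exp (f := f)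
    (hρ (measurableSet_singleton ⊤)).compl hPQ
    (by filter_upwards [ae_lt_top hρ hρ_fin] with p hp using hp.ne)
    (((measurable_llr μX μ).comp measurable_fst).neg.sub (hρ.ennreal_toReal.const_mul s))
    (hllr_int.fun_neg.sub (hρ_int.const_mul s)) hPint
  have hZ : ∫⁻ p in {p : X × Y | ρ p.1 p.2 ≠ ⊤}, ENNReal.ofReal (exp (f p)) ∂(P.fst.prod P.snd)
      ≤ ⨆ y, ∫⁻ x, expNeg (ENNReal.ofReal s * ρ x y) ∂μ := by
    rw [hfst]
    exact setLIntegral_exp_neg_llr_sub_le_iSup hac hρ P.snd hs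
  calc _ ≤ ((s * D : ℝ) : EReal) +
          ((∫ p, f p ∂P - ∫ p, llr P (P.fst.prod P.snd) p ∂P : ℝ) : EReal) := by
        rw [← EReal.coe_add]
        exact EReal.coe_le_coe_iff.2 (by linarith)
    _ ≤ _ := add_le_add le_rfl (hDV.trans (ENNReal.log_monotone hZ))

end Distortion

theorem stmt1_general
    {X Y : Type*} [MeasurableSpace X] [MeasurableSpace Y]
    (μX : Measure X) [IsProbabilityMeasure μX]
    (ρ : X → Y → ℝ≥0∞) (hρ : Measurable (fun p : X × Y => ρ p.1 p.2))
    (μ : Measure X) [SigmaFinite μ] (hac : μX ≪ μ)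
    (h : ℝ)
    (hint : Integrable (fun x => Real.log (μX.rnDeriv μ x).toReal) μX)
    (hh : h = -∫ x, Real.log (μX.rnDeriv μ x).toReal ∂μX)
    (ν : ℝ → ℝ≥0∞)
    (hν : ∀ s : ℝ, ν s = ⨆ y : Y, ∫⁻ x, expNeg (ENNReal.ofReal s * ρ x y) ∂μ)
    (D₀ : ℝ) (hD₀ : D₀ = sInf {D : ℝ | 0 ≤ D ∧ RD μX ρ D < ⊤}) :
    ∀ D : ℝ, D₀ < D →
      RD μX ρ D ≥
        (h : EReal) - ⨅ s : {s : ℝ // 0 ≤ s}, (((s : ℝ) * D : ℝ) : EReal) + ENNReal.log (ν s) := by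
  intro D hD
  have hD_nonneg : 0 ≤ D := (hD₀ ▸ Real.sInf_nonneg fun _ hx ↦ hx.1 : 0 ≤ D₀).trans hD.le
  refine le_iInf₂ fun P hP ↦ le_iInf₂ fun hfst hρP ↦ ?_
  rw [mutualInfo]
  split_ifs with hcond
  · obtain ⟨hPQ, hPint⟩ := hcond
    set K := ∫ p, llr P (P.fst.prod P.snd) p ∂P
    have hK : ((h - K : ℝ) : EReal) ≤
        ⨅ s : {s : ℝ // 0 ≤ s}, (((s : ℝ) * D : ℝ) : EReal) + ENNReal.log (ν s) :=
      le_iInf fun s ↦ hh ▸ hν s ▸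
        coe_neg_integral_llr_sub_integral_llr_le hac hint hρ hfst hPQ hPint s.2 hD_nonneg hρP
    calc _ ≤ (h : EReal) - ((h - K : ℝ) : EReal) := EReal.sub_le_sub le_rfl hK
      _ = K := by norm_cast; ring
  · exact le_top

/-- Shannon lower bound for general reference measures, Lemma 3 of the
paper. If (i) `inf_y ρ(x,y) = 0` for all `x`, (ii) `E[min_{y ∈ B} ρ(X,y)] < ∞` for some
finite `B ⊆ Y`, and `μ` is a σ-finite reference measure for `X` (`μX ≪ μ`, generalized
entropy `h = hμ(X)` finite), then for every `D ∈ (D₀,∞)`,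
`R(D) ≥ h − inf_{s ≥ 0}(sD + log ν(s))` where `ν(s) = sup_y ∫ e^{-sρ(x,y)} dμ(x)`. -/
theorem stmt1
    {X Y : Type*} [MeasurableSpace X] [StandardBorelSpace X]
    [MeasurableSpace Y] [StandardBorelSpace Y]
    (μX : Measure X) [IsProbabilityMeasure μX]
    (ρ : X → Y → ℝ≥0∞) (hρ : Measurable (fun p : X × Y => ρ p.1 p.2))
    (hinf : ∀ x : X, (⨅ y : Y, ρ x y) = 0)
    (hB : ∃ B : Finset Y, B.Nonempty ∧ (∫⁻ x, ⨅ y ∈ B, ρ x y ∂μX) < ⊤)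
    (μ : Measure X) [SigmaFinite μ] (hac : μX ≪ μ)
    (h : ℝ)
    (hint : Integrable (fun x => Real.log (μX.rnDeriv μ x).toReal) μX)
    (hh : h = -∫ x, Real.log (μX.rnDeriv μ x).toReal ∂μX)
    (ν : ℝ → ℝ≥0∞)
    (hν : ∀ s : ℝ, ν s = ⨆ y : Y, ∫⁻ x, expNeg (ENNReal.ofReal s * ρ x y) ∂μ)
    (D₀ : ℝ) (hD₀ : D₀ = sInf {D : ℝ | 0 ≤ D ∧ RD μX ρ D < ⊤}) :
    ∀ D : ℝ, D₀ < D →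
      RD μX ρ D ≥
        (h : EReal) - ⨅ s : {s : ℝ // 0 ≤ s}, (((s : ℝ) * D : ℝ) : EReal) + ENNReal.log (ν s) :=
  stmt1_general μX ρ hρ μ hac h hint hh ν hν D₀ hD₀
end

section
/- Let (X,𝒳,μ) be a measure space, (Y,𝒴) a measurable space, ρ : X × Y → [0,∞] a measurable distortion function, and k > 0, m > 0, c > 0. If μ(B_{ρ^{1/k}}(y,δ)) ≤ c δ^m for all y ∈ Y and all δ > 0, then for every s > 0 and every y ∈ Y, ∫ e^{−s ρ(x,y)} dμ(x) ≤ c · Γ(m/k + 1) · s^{−m/k}. -/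
/-!
Layer cake: `e^{-u} = ∫_0^∞ 1_{u < l} e^{-l} dl`, so by Tonelli
`∫ e^{-s ρ(x,y)} dμ(x) = ∫_0^∞ e^{-l} μ{x | s ρ(x,y) < l} dl`.
The ball bound with `δ = (l/s)^{1/k}` gives `μ{s ρ < l} ≤ c (l/s)^{m/k}`, and
`∫_0^∞ e^{-l} l^{m/k} dl = Γ(m/k + 1)`.
Tonelli needs σ-finiteness, which the ball bound provides on `{ρ(·,y) < ∞}`,
the only place where the integrand is nonzero.
-/

open MeasureTheory Real Set
open scoped ENNReal NNReal

lemma expNeg_eq_setLIntegral (u : ℝ≥0∞) :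
    expNeg u = ∫⁻ l in Ioi (0 : ℝ),
      if u < ENNReal.ofReal l then ENNReal.ofReal (exp (-l)) else 0 := by
  by_cases hu : u = ⊤
  · simp [expNeg, hu]
  have hint : IntegrableOn (fun l => exp (-l)) (Ioi u.toReal) := by
    simpa using exp_neg_integrableOn_Ioi u.toReal one_pos
  symm
  calc ∫⁻ l in Ioi (0 : ℝ), (if u < ENNReal.ofReal l then ENNReal.ofReal (exp (-l)) else 0)
      = ∫⁻ l in Ioi (0 : ℝ),
          (Ioi u.toReal).indicator (fun l => ENNReal.ofReal (exp (-l))) l := by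
        simp only [indicator_apply, mem_Ioi, ENNReal.lt_ofReal_iff_toReal_lt hu]
    _ = ∫⁻ l in Ioi u.toReal, ENNReal.ofReal (exp (-l)) := by
        rw [lintegral_indicator measurableSet_Ioi, Measure.restrict_restrict measurableSet_Ioi,
          Ioi_inter_Ioi, sup_eq_left.2 ENNReal.toReal_nonneg]
    _ = expNeg u := by
        rw [← ofReal_integral_eq_lintegral_ofReal hint (ae_of_all _ fun l => (exp_pos _).le),
          integral_exp_neg_Ioi, expNeg, if_neg hu]

lemma lintegral_exp_neg_mul_rpow_eq_Gamma {a : ℝ} (ha : -1 < a) :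
    ∫⁻ l in Ioi (0 : ℝ), ENNReal.ofReal (exp (-l) * l ^ a) =
      ENNReal.ofReal (Gamma (a + 1)) := by
  have hint := GammaIntegral_convergent (by linarith : 0 < a + 1)
  rw [add_sub_cancel_right] at hint
  rw [Gamma_eq_integral (by linarith), add_sub_cancel_right,
    ofReal_integral_eq_lintegral_ofReal hint]
  exact (ae_restrict_iff' measurableSet_Ioi).2 (ae_of_all _ fun l (hl : 0 < l) => by positivity)

lemma setOf_ofReal_mul_lt_ofReal {X : Type*} (g : X → ℝ≥0∞) {s : ℝ} (hs : 0 < s) (l : ℝ) :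
    {x | ENNReal.ofReal s * g x < ENNReal.ofReal l} = {x | g x < ENNReal.ofReal (l / s)} := by
  ext x
  rw [mem_ofPred_eq, mem_ofPred_eq, ENNReal.ofReal_div_of_pos hs, mul_comm,
    ENNReal.lt_div_iff_mul_lt (Or.inl (ENNReal.ofReal_pos.2 hs).ne') (Or.inl ENNReal.ofReal_ne_top)]

section

variable {X : Type*} [MeasurableSpace X]

lemma lintegral_expNeg_eq_lintegral_meas_lt (ν : Measure X) [SFinite ν] {f : X → ℝ≥0∞}
    (hf : Measurable f) :
    ∫⁻ x, expNeg (f x) ∂ν =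
      ∫⁻ l in Ioi (0 : ℝ), ENNReal.ofReal (exp (-l)) * ν {x | f x < ENNReal.ofReal l} := by
  have hmeas : Measurable fun p : X × ℝ =>
      if f p.1 < ENNReal.ofReal p.2 then ENNReal.ofReal (exp (-p.2)) else 0 := by
    refine Measurable.ite (measurableSet_lt (hf.comp measurable_fst) ?_) ?_ measurable_const <;>
      fun_prop
  simp_rw [expNeg_eq_setLIntegral]
  rw [lintegral_lintegral_swap hmeas.aemeasurable]
  refine lintegral_congr fun l => ?_
  rw [← lintegral_indicator_const (measurableSet_lt hf measurable_const)]
  simp only [indicator_apply, mem_ofPred_eq]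

lemma sigmaFinite_restrict_ne_top (μ : Measure X) {f : X → ℝ≥0∞} (hf : Measurable f)
    (hfin : ∀ l : ℝ, 0 < l → μ {x | f x < ENNReal.ofReal l} ≠ ∞) :
    SigmaFinite (μ.restrict {x | f x ≠ ⊤}) := by
  have hA : MeasurableSet {x | f x ≠ ⊤} := ((measurableSet_singleton ⊤).preimage hf).compl
  refine ⟨⟨⟨fun n : ℕ => {x | f x < ENNReal.ofReal (n + 1)} ∪ {x | f x ≠ ⊤}ᶜ,
    fun _ => trivial, fun n => ?_, ?_⟩⟩⟩
  · rw [Measure.restrict_apply' hA, union_inter_distrib_right, compl_inter_self, union_empty]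
    exact (measure_mono inter_subset_left).trans_lt (hfin _ (by positivity)).lt_top
  · refine eq_univ_of_forall fun x => ?_
    by_cases hx : f x = ⊤
    · exact mem_iUnion.2 ⟨0, Or.inr (by simpa using hx)⟩
    · obtain ⟨n, hn⟩ := ENNReal.exists_nat_gt hx
      refine mem_iUnion.2 ⟨n, Or.inl (hn.trans_le ?_)⟩
      rw [← ENNReal.ofReal_natCast]
      exact ENNReal.ofReal_le_ofReal (by linarith)

lemma lintegral_expNeg_eq_lintegral_meas_lt_of_ne_top (μ : Measure X) {f : X → ℝ≥0∞}
    (hf : Measurable f) (hfin : ∀ l : ℝ, 0 < l → μ {x | f x < ENNReal.ofReal l} ≠ ∞) :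
    ∫⁻ x, expNeg (f x) ∂μ =
      ∫⁻ l in Ioi (0 : ℝ), ENNReal.ofReal (exp (-l)) * μ {x | f x < ENNReal.ofReal l} := by
  have := sigmaFinite_restrict_ne_top μ hf hfin
  have hsupp : Function.support (fun x => expNeg (f x)) ⊆ {x | f x ≠ ⊤} :=
    fun x hx hfx => hx (by simp [expNeg, hfx])
  rw [← setLIntegral_eq_of_support_subset hsupp,
    lintegral_expNeg_eq_lintegral_meas_lt _ hf]
  refine setLIntegral_congr_fun measurableSet_Ioi fun l _ => ?_
  have hsub : {x | f x < ENNReal.ofReal l} ⊆ {x | f x ≠ ⊤} := fun x hx => ne_top_of_lt hx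
  rw [Measure.restrict_eq_self _ hsub]

lemma measure_lt_ofReal_le_of_forall_rpow (μ : Measure X) {g : X → ℝ≥0∞} {k m c : ℝ} (hk : 0 < k)
    (h : ∀ δ : ℝ, 0 < δ →
      μ {x | g x < ENNReal.ofReal (δ ^ k)} ≤ ENNReal.ofReal (c * δ ^ m))
    {t : ℝ} (ht : 0 < t) :
    μ {x | g x < ENNReal.ofReal t} ≤ ENNReal.ofReal (c * t ^ (m / k)) := by
  have hδk : (t ^ k⁻¹) ^ k = t := by rw [← rpow_mul ht.le, inv_mul_cancel₀ hk.ne', rpow_one]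
  have hδm : (t ^ k⁻¹) ^ m = t ^ (m / k) := by rw [← rpow_mul ht.le, inv_mul_eq_div]
  simpa only [hδk, hδm] using h _ (rpow_pos_of_pos ht k⁻¹)

end

/-- If `μ(B_{ρ^{1/k}}(y,δ)) ≤ c δ^m` for all `y` and all `δ > 0`, then
`∫ e^{-s ρ(x,y)} dμ(x) ≤ c Γ(m/k + 1) s^{-m/k}` for all `s > 0` and `y`. -/
theorem stmt2
    {X Y : Type*} [MeasurableSpace X] [MeasurableSpace Y]
    (μ : Measure X)
    (ρ : X → Y → ℝ≥0∞) (hρ : Measurable (fun p : X × Y => ρ p.1 p.2))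
    (k m : ℝ) (hk : 0 < k) (hm : 0 < m) (c : ℝ) (hc : 0 < c)
    (hsub : ∀ y : Y, ∀ δ : ℝ, 0 < δ →
      μ {x | ρ x y < ENNReal.ofReal (δ ^ k)} ≤ ENNReal.ofReal (c * δ ^ m)) :
    ∀ s : ℝ, 0 < s → ∀ y : Y,
      ∫⁻ x, expNeg (ENNReal.ofReal s * ρ x y) ∂μ ≤
        ENNReal.ofReal (c * Real.Gamma (m / k + 1) * s ^ (-(m / k))) := by
  intro s hs y
  have hlevel : ∀ l : ℝ, 0 < l → μ {x | ENNReal.ofReal s * ρ x y < ENNReal.ofReal l} ≤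
      ENNReal.ofReal (c * (l / s) ^ (m / k)) := fun l hl => by
    rw [setOf_ofReal_mul_lt_ofReal _ hs]
    exact measure_lt_ofReal_le_of_forall_rpow μ hk (hsub y) (div_pos hl hs)
  have hf : Measurable fun x => ENNReal.ofReal s * ρ x y :=
    measurable_const.mul (hρ.comp measurable_prodMk_right)
  rw [lintegral_expNeg_eq_lintegral_meas_lt_of_ne_top μ hf
    fun l hl => ((hlevel l hl).trans_lt ENNReal.ofReal_lt_top).ne]
  calc _ ≤ ∫⁻ l in Ioi (0 : ℝ), ENNReal.ofReal (c * s ^ (-(m / k))) *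
        ENNReal.ofReal (exp (-l) * l ^ (m / k)) := by
        refine setLIntegral_mono' measurableSet_Ioi fun l (hl : 0 < l) => ?_
        refine (mul_le_mul_right (hlevel l hl) _).trans_eq ?_
        rw [← ENNReal.ofReal_mul (exp_pos _).le, ← ENNReal.ofReal_mul (by positivity),
          div_rpow hl.le hs.le, rpow_neg hs.le]
        congr 1
        ring
    _ = ENNReal.ofReal (c * Gamma (m / k + 1) * s ^ (-(m / k))) := by
        rw [lintegral_const_mul' _ _ ENNReal.ofReal_ne_top,
          lintegral_exp_neg_mul_rpow_eq_Gamma (by linarith [div_pos hm hk]),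
          ← ENNReal.ofReal_mul (by positivity)]
        congr 1
        ring
end

section
/- Let (X,𝒳,μ) be a measure space with μ(X) < ∞, (Y,𝒴) a measurable space, ρ : X × Y → [0,∞] a measurable distortion function, and k > 0, m > 0, c > 0, δ₀ ∈ (0,∞). If μ(B_{ρ^{1/k}}(y,δ)) ≤ c δ^m for all y ∈ Y and all δ ∈ (0,δ₀), then for every s > 0 and every y ∈ Y, ∫ e^{−(s/δ₀^k) ρ(x,y)} dμ(x) ≤ ( μ(X) Γ(m/k + 1) − (μ(X) − δ₀^m c) γ(m/k + 1, s) ) / s^{m/k}. -/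
open MeasureTheory Real Set
open scoped ENNReal NNReal

/-- The lower incomplete gamma function `γ(a,s) = ∫₀^s t^{a-1} e^{-t} dt`. -/
noncomputable def lowerGamma (a s : ℝ) : ℝ :=
  ∫ t in (0:ℝ)..s, t ^ (a - 1) * Real.exp (-t)

/-! Since `e^{-λr} = ∫_{u > r} λ e^{-λu} du`, Tonelli gives, with `λ = s / δ₀^k` and `T = δ₀^k`,
`∫ e^{-λ ρ(·,y)} dμ = ∫_0^∞ λ e^{-λu} μ{ρ(·,y) < u} du`. For `u ≥ T` the measure is at most `μ(X)`,
which contributes `μ(X) e^{-s}`; for `u < T` the hypothesis at radius `δ = u^{1/k}` gives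
`μ{ρ(·,y) < u} ≤ c u^{m/k}`, and the substitution `t = λu` turns this part into
`c δ₀^m γ(m/k+1, s) / s^{m/k}`. Finally `s^{m/k} e^{-s} ≤ Γ(m/k+1) - γ(m/k+1, s)`, because the upper
incomplete gamma integral `∫_s^∞ t^{m/k} e^{-t} dt` dominates `s^{m/k} ∫_s^∞ e^{-t} dt`. -/

lemma lintegral_Ioi_ofReal_mul_exp_neg_mul {l : ℝ} (hl : 0 < l) (r : ℝ) :
    ∫⁻ u in Ioi r, ENNReal.ofReal (l * exp (-(l * u))) = ENNReal.ofReal (exp (-(l * r))) := by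
  have hint : IntegrableOn (fun u => l * exp (-(l * u))) (Ioi r) := by
    simpa only [IntegrableOn, neg_mul] using (exp_neg_integrableOn_Ioi r hl).const_mul l
  rw [← ofReal_integral_eq_lintegral_ofReal hint (.of_forall fun u => by positivity),
    integral_const_mul]
  simp_rw [← neg_mul]
  rw [integral_exp_mul_Ioi (neg_lt_zero.2 hl)]
  field_simp

lemma expNeg_ofReal_mul_eq_lintegral {l : ℝ} (hl : 0 < l) (v : ℝ≥0∞) :
    expNeg (ENNReal.ofReal l * v) = ∫⁻ u in Ioi 0,
      {u : ℝ | v < ENNReal.ofReal u}.indicator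
        (fun u => ENNReal.ofReal (l * exp (-(l * u)))) u := by
  rcases eq_or_ne v ⊤ with rfl | hv
  · simp [expNeg, ENNReal.mul_top (ENNReal.ofReal_pos.2 hl).ne']
  obtain ⟨r, hr, rfl⟩ : ∃ r, 0 ≤ r ∧ v = ENNReal.ofReal r :=
    ⟨v.toReal, ENNReal.toReal_nonneg, (ENNReal.ofReal_toReal hv).symm⟩
  have hset : {u : ℝ | ENNReal.ofReal r < ENNReal.ofReal u} ∩ Ioi 0 = Ioi r := by
    ext u
    simp only [mem_inter_iff, mem_ofPred_eq, mem_Ioi]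
    constructor
    · rintro ⟨h, hu⟩
      exact (ENNReal.ofReal_lt_ofReal_iff hu).1 h
    · intro h
      exact ⟨(ENNReal.ofReal_lt_ofReal_iff (hr.trans_lt h)).2 h, hr.trans_lt h⟩
  have hmeas : MeasurableSet {u : ℝ | ENNReal.ofReal r < ENNReal.ofReal u} :=
    measurableSet_lt measurable_const ENNReal.measurable_ofReal
  rw [lintegral_indicator hmeas, Measure.restrict_restrict hmeas, hset,
    lintegral_Ioi_ofReal_mul_exp_neg_mul hl, ← ENNReal.ofReal_mul hl.le, expNeg,
    if_neg ENNReal.ofReal_ne_top, ENNReal.toReal_ofReal (by positivity)]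

section LayerCake

variable {X : Type*} [MeasurableSpace X] {μ : Measure X} {f : X → ℝ≥0∞}

lemma lintegral_expNeg_ofReal_mul_eq [SFinite μ] {l : ℝ} (hl : 0 < l) (hf : Measurable f) :
    ∫⁻ x, expNeg (ENNReal.ofReal l * f x) ∂μ =
      ∫⁻ u in Ioi 0, ENNReal.ofReal (l * exp (-(l * u))) * μ {x | f x < ENNReal.ofReal u} := by
  simp_rw [expNeg_ofReal_mul_eq_lintegral hl]
  rw [lintegral_lintegral_swap]
  · refine lintegral_congr fun u => ?_
    have hslice : (fun x => {u : ℝ | f x < ENNReal.ofReal u}.indicator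
          (fun u => ENNReal.ofReal (l * exp (-(l * u)))) u) =
        {x | f x < ENNReal.ofReal u}.indicator fun _ => ENNReal.ofReal (l * exp (-(l * u))) := by
      ext x
      simp only [indicator_apply, mem_ofPred_eq]
    rw [hslice, lintegral_indicator_const (measurableSet_lt hf measurable_const)]
  · refine (Measurable.indicator ?_ (measurableSet_lt (hf.comp measurable_fst)
      (ENNReal.measurable_ofReal.comp measurable_snd))).aemeasurable
    fun_prop

lemma lintegral_expNeg_ofReal_mul_le [SFinite μ] {l T : ℝ} (hl : 0 < l) (hT : 0 < T)
    (hf : Measurable f) :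
    ∫⁻ x, expNeg (ENNReal.ofReal l * f x) ∂μ ≤
      ENNReal.ofReal (exp (-(l * T))) * μ univ +
        ∫⁻ u in Ioo 0 T, ENNReal.ofReal (l * exp (-(l * u))) * μ {x | f x < ENNReal.ofReal u} := by
  rw [lintegral_expNeg_ofReal_mul_eq hl hf, ← Ioo_union_Ici_eq_Ioi hT,
    lintegral_union measurableSet_Ici ((Iio_disjoint_Ici le_rfl).mono_left Ioo_subset_Iio_self),
    add_comm]
  gcongr
  calc ∫⁻ u in Ici T, ENNReal.ofReal (l * exp (-(l * u))) * μ {x | f x < ENNReal.ofReal u}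
      ≤ ∫⁻ u in Ici T, ENNReal.ofReal (l * exp (-(l * u))) * μ univ := by
        gcongr
        exact subset_univ _
    _ = ENNReal.ofReal (exp (-(l * T))) * μ univ := by
        rw [lintegral_mul_const _ (by fun_prop), setLIntegral_congr Ioi_ae_eq_Ici.symm,
          lintegral_Ioi_ofReal_mul_exp_neg_mul hl]

lemma measure_lt_ofReal_le_of_rpow {k m c δ₀ : ℝ} (hk : 0 < k) (hδ₀ : 0 < δ₀)
    (hball : ∀ δ : ℝ, 0 < δ → δ < δ₀ →
      μ {x | f x < ENNReal.ofReal (δ ^ k)} ≤ ENNReal.ofReal (c * δ ^ m))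
    {u : ℝ} (hu : u ∈ Ioo 0 (δ₀ ^ k)) :
    μ {x | f x < ENNReal.ofReal u} ≤ ENNReal.ofReal (c * u ^ (m / k)) := by
  have hroot : (u ^ k⁻¹) ^ k = u := rpow_inv_rpow hu.1.le hk.ne'
  have hlt : u ^ k⁻¹ < δ₀ := by
    simpa [rpow_rpow_inv hδ₀.le hk.ne'] using
      rpow_lt_rpow hu.1.le hu.2 (inv_pos.2 hk)
  simpa [hroot, ← rpow_mul hu.1.le, div_eq_inv_mul] using
    hball _ (rpow_pos_of_pos hu.1 _) hlt

end LayerCake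

lemma integral_rpow_mul_exp_neg_mul_eq_lowerGamma {r T : ℝ} (hr : 0 < r) (hT : 0 ≤ T) (a : ℝ) :
    ∫ t in 0..T, t ^ (a - 1) * exp (-(r * t)) = (1 / r) ^ a * lowerGamma a (r * T) := by
  have hscale : ∫ t in 0..T, (r * t) ^ (a - 1) * exp (-(r * t)) =
      r ^ (a - 1) * ∫ t in 0..T, t ^ (a - 1) * exp (-(r * t)) := by
    rw [← intervalIntegral.integral_const_mul]
    refine intervalIntegral.integral_congr fun t ht => ?_
    rw [uIcc_of_le hT] at ht
    simp only [mul_rpow hr.le ht.1, mul_assoc]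
  have hsub := intervalIntegral.integral_comp_mul_left
    (fun t : ℝ => t ^ (a - 1) * exp (-t)) hr.ne' (a := 0) (b := T)
  rw [hscale, mul_zero, smul_eq_mul, rpow_sub_one hr.ne'] at hsub
  have hL : lowerGamma a (r * T) = r ^ a * ∫ t in 0..T, t ^ (a - 1) * exp (-(r * t)) := by
    rw [lowerGamma]
    field_simp at hsub
    linarith
  rw [hL, one_div, inv_rpow hr.le, inv_mul_cancel_left₀ (rpow_pos_of_pos hr a).ne']

lemma lowerGamma_nonneg (a : ℝ) {s : ℝ} (hs : 0 ≤ s) : 0 ≤ lowerGamma a s :=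
  intervalIntegral.integral_nonneg hs fun _ ht => mul_nonneg (rpow_nonneg ht.1 _) (exp_pos _).le

lemma rpow_mul_exp_neg_add_lowerGamma_le_Gamma {a s : ℝ} (ha : 1 ≤ a) (hs : 0 ≤ s) :
    s ^ (a - 1) * exp (-s) + lowerGamma a s ≤ Gamma a := by
  have hconv := GammaIntegral_convergent (zero_lt_one.trans_le ha)
  have hexp : IntegrableOn (fun x => exp (-x)) (Ioi s) := by
    simpa using exp_neg_integrableOn_Ioi s zero_lt_one
  have htail : s ^ (a - 1) * exp (-s) ≤ ∫ x in Ioi s, exp (-x) * x ^ (a - 1) := by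
    calc s ^ (a - 1) * exp (-s) = ∫ x in Ioi s, exp (-x) * s ^ (a - 1) := by
          rw [integral_mul_const, integral_exp_neg_Ioi, mul_comm]
      _ ≤ ∫ x in Ioi s, exp (-x) * x ^ (a - 1) := by
          refine setIntegral_mono_on (hexp.mul_const _)
            (hconv.mono_set (Ioi_subset_Ioi hs)) measurableSet_Ioi fun x hx => ?_
          gcongr
          exact hx.le
  have hhead : lowerGamma a s = ∫ x in Ioc 0 s, exp (-x) * x ^ (a - 1) := by
    rw [lowerGamma, intervalIntegral.integral_of_le hs]
    exact setIntegral_congr_fun measurableSet_Ioc fun x _ => mul_comm _ _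
  rw [Gamma_eq_integral (zero_lt_one.trans_le ha), ← Ioc_union_Ioi_eq_Ioi hs,
    setIntegral_union (Ioc_disjoint_Ioi le_rfl) measurableSet_Ioi
      (hconv.mono_set Ioc_subset_Ioi_self) (hconv.mono_set (Ioi_subset_Ioi hs)), hhead]
  linarith

lemma lintegral_Ioo_ofReal_mul_exp_neg_mul_le {g : ℝ → ℝ≥0∞} {l T c a : ℝ} (hl : 0 < l)
    (hT : 0 ≤ T) (hc : 0 ≤ c) (ha : 1 ≤ a)
    (hg : ∀ u ∈ Ioo 0 T, g u ≤ ENNReal.ofReal (c * u ^ (a - 1))) :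
    ∫⁻ u in Ioo 0 T, ENNReal.ofReal (l * exp (-(l * u))) * g u ≤
      ENNReal.ofReal (c * (1 / l) ^ (a - 1) * lowerGamma a (l * T)) := by
  have hint : IntegrableOn (fun u => c * l * (u ^ (a - 1) * exp (-(l * u)))) (Ioo 0 T) :=
    (Continuous.integrableOn_Icc (by fun_prop (disch := linarith))).mono_set Ioo_subset_Icc_self
  calc ∫⁻ u in Ioo 0 T, ENNReal.ofReal (l * exp (-(l * u))) * g u
      ≤ ∫⁻ u in Ioo 0 T, ENNReal.ofReal (c * l * (u ^ (a - 1) * exp (-(l * u)))) := by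
        refine setLIntegral_mono' measurableSet_Ioo fun u hu => ?_
        refine (mul_le_mul_right (hg u hu) _).trans_eq ?_
        rw [← ENNReal.ofReal_mul (by positivity)]
        ring_nf
    _ = ENNReal.ofReal (∫ u in Ioo 0 T, c * l * (u ^ (a - 1) * exp (-(l * u)))) :=
        (ofReal_integral_eq_lintegral_ofReal hint
          ((ae_restrict_iff' measurableSet_Ioo).2 (.of_forall fun u hu => by
            have := hu.1
            positivity))).symm
    _ = ENNReal.ofReal (c * (1 / l) ^ (a - 1) * lowerGamma a (l * T)) := by
        rw [← integral_Ioc_eq_integral_Ioo, ← intervalIntegral.integral_of_le hT,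
          intervalIntegral.integral_const_mul, integral_rpow_mul_exp_neg_mul_eq_lowerGamma hl hT,
          rpow_sub_one (by positivity)]
        field_simp

/-- If `μ(X) < ∞` and `μ(B_{ρ^{1/k}}(y,δ)) ≤ c δ^m` for all `y` and all
`δ ∈ (0,δ₀)`, then for all `s > 0` and `y`,
`∫ e^{-(s/δ₀^k) ρ(x,y)} dμ(x) ≤ (μ(X) Γ(m/k+1) − (μ(X) − δ₀^m c) γ(m/k+1,s)) / s^{m/k}`. -/
theorem stmt5
    {X Y : Type*} [MeasurableSpace X] [MeasurableSpace Y]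
    (μ : Measure X) (hμfin : μ Set.univ < ⊤)
    (ρ : X → Y → ℝ≥0∞) (hρ : Measurable (fun p : X × Y => ρ p.1 p.2))
    (k m : ℝ) (hk : 0 < k) (hm : 0 < m) (c δ₀ : ℝ) (hc : 0 < c) (hδ₀ : 0 < δ₀)
    (hsub : ∀ y : Y, ∀ δ : ℝ, 0 < δ → δ < δ₀ →
      μ {x | ρ x y < ENNReal.ofReal (δ ^ k)} ≤ ENNReal.ofReal (c * δ ^ m)) :
    ∀ s : ℝ, 0 < s → ∀ y : Y,
      ∫⁻ x, expNeg (ENNReal.ofReal (s / δ₀ ^ k) * ρ x y) ∂μ ≤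
        ENNReal.ofReal
          (((μ Set.univ).toReal * Real.Gamma (m / k + 1)
              - ((μ Set.univ).toReal - δ₀ ^ m * c) * lowerGamma (m / k + 1) s)
            / s ^ (m / k)) := by
  intro s hs y
  have : IsFiniteMeasure μ := ⟨hμfin⟩
  have hT : 0 < δ₀ ^ k := rpow_pos_of_pos hδ₀ k
  have hl : 0 < s / δ₀ ^ k := div_pos hs hT
  have ha : 1 ≤ m / k + 1 := le_add_of_nonneg_left (div_pos hm hk).le
  have hscale : (1 / (s / δ₀ ^ k)) ^ (m / k + 1 - 1) = δ₀ ^ m / s ^ (m / k) := by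
    rw [add_sub_cancel_right, one_div_div, div_rpow hT.le hs.le, ← rpow_mul hδ₀.le,
      mul_div_cancel₀ m hk.ne']
  have hbound := (lintegral_expNeg_ofReal_mul_le (f := fun x => ρ x y) hl hT
    (hρ.comp measurable_prodMk_right)).trans
    (add_le_add_right (lintegral_Ioo_ofReal_mul_exp_neg_mul_le hl hT.le hc.le ha fun u hu => by
      simpa using measure_lt_ofReal_le_of_rpow hk hδ₀ (hsub y) hu) _)
  rw [div_mul_cancel₀ s hT.ne', hscale, ← ENNReal.ofReal_toReal hμfin.ne,
    ← ENNReal.ofReal_mul (exp_pos _).le, ← ENNReal.ofReal_add (by positivity)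
      (by have := lowerGamma_nonneg (m / k + 1) hs.le; positivity)] at hbound
  refine hbound.trans (ENNReal.ofReal_le_ofReal ?_)
  have hΓ := rpow_mul_exp_neg_add_lowerGamma_le_Gamma ha hs.le
  rw [add_sub_cancel_right] at hΓ
  have hsa : 0 < s ^ (m / k) := rpow_pos_of_pos hs _
  rw [le_div_iff₀ hsa, add_mul, show c * (δ₀ ^ m / s ^ (m / k)) * lowerGamma (m / k + 1) s *
    s ^ (m / k) = δ₀ ^ m * c * lowerGamma (m / k + 1) s by field_simp]
  linarith [mul_le_mul_of_nonneg_left hΓ (μ univ).toReal_nonneg]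
end

section
/- Let X be a random variable on ℝ^d whose distribution μ_X is absolutely continuous with respect to Lebesgue measure λ^d with density f, and suppose the differential entropy h(X) := −∫ f(x) log f(x) dx is finite. Let ‖·‖ be a norm on ℝ^d with unit-ball Lebesgue measure V_d, let k > 0, and set ρ(x,y) := ‖x − y‖^k and ν(s) := sup_{y∈ℝ^d} ∫_{ℝ^d} e^{−s ρ(x,y)} dx. Then for every D > 0, h(X) − inf_{s ≥ 0} ( s·D + log ν(s) ) = h(X) + log( (d/(k·D))^{d/k} / ( V_d · Γ(d/k + 1) ) ) − d/k. -/
/-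
Translation invariance of Lebesgue measure removes the supremum in `ν`, and the homogeneity
`N (a • x) = |a| * N x` turns the substitution `x ↦ s ^ (1 / k) • x` into
`ν s = s ^ (-d / k) * I` with `I = ∫ exp (-N x ^ k)`. The layer-cake formula identifies `I` with
`V_d * Γ (d / k + 1)`. Finally `s ↦ s * D + log I - (d / k) * log s` is minimised at
`s = d / (k * D)`, which is the tangent-line inequality `log t ≤ t - 1`.
-/

open MeasureTheory Real Set Module
open scoped ENNReal

theorem sub_mul_log_div_le {γ D s : ℝ} (hγ : 0 ≤ γ) (hD : 0 < D) (hs : 0 < s) :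
    γ - γ * log (γ / D) ≤ s * D - γ * log s := by
  rcases hγ.eq_or_lt with rfl | hγ
  · simpa using (mul_pos hs hD).le
  have := log_le_sub_one_of_pos (show 0 < s * D / γ by positivity)
  rw [log_div (by positivity) hγ.ne', log_mul hs.ne' hD.ne'] at this
  rw [log_div hγ.ne' hD.ne']
  have h := mul_le_mul_of_nonneg_left this hγ.le
  have hγsD : γ * (s * D / γ - 1) = s * D - γ := by field_simp
  linarith

theorem ENNReal.log_ofReal_rpow_neg_mul {γ s I : ℝ} (hI : 0 < I) (hs : 0 < s ∨ γ = 0) :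
    ENNReal.log (ENNReal.ofReal s ^ (-γ) * ENNReal.ofReal I) =
      ((Real.log I - γ * Real.log s : ℝ) : EReal) := by
  rcases hs with hs | rfl
  · rw [ENNReal.ofReal_rpow_of_pos hs, ← ENNReal.ofReal_mul (by positivity),
      ENNReal.log_ofReal_of_pos (by positivity), Real.log_mul (by positivity) hI.ne',
      Real.log_rpow hs]
    congr 1
    ring
  · simp [ENNReal.log_ofReal_of_pos hI]

theorem iInf_mul_add_log_rpow_neg_mul {γ D I : ℝ} (hγ : 0 ≤ γ) (hD : 0 < D) (hI : 0 < I) :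
    ⨅ s : {s : ℝ // 0 ≤ s},
        ((s * D : ℝ) : EReal) + ENNReal.log (ENNReal.ofReal s ^ (-γ) * ENNReal.ofReal I) =
      ((γ - log ((γ / D) ^ γ / I) : ℝ) : EReal) := by
  have hmin : 0 < γ / D ∨ γ = 0 :=
    (hγ.eq_or_lt.imp (fun h => h.symm) (fun h => div_pos h hD)).symm
  have hval : γ - log ((γ / D) ^ γ / I) = γ / D * D + (log I - γ * log (γ / D)) := by
    rcases hγ.eq_or_lt with rfl | hγ
    · simp [log_inv]
    rw [div_mul_cancel₀ _ hD.ne', log_div (by positivity) hI.ne', log_rpow (by positivity)]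
    ring
  refine le_antisymm (iInf_le_of_le ⟨γ / D, by positivity⟩ ?_) (le_iInf fun ⟨s, hs⟩ => ?_)
  · rw [ENNReal.log_ofReal_rpow_neg_mul hI hmin, ← EReal.coe_add, hval]
  dsimp only
  rcases hs.eq_or_lt with rfl | hs
  · rcases hγ.eq_or_lt with rfl | hγ
    · simp [ENNReal.log_ofReal_of_pos hI]
    rw [ENNReal.ofReal_zero, ENNReal.zero_rpow_of_neg (neg_neg_of_pos hγ),
      ENNReal.top_mul (ENNReal.ofReal_pos.mpr hI).ne', ENNReal.log_top, EReal.coe_add_top]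
    exact le_top
  rw [ENNReal.log_ofReal_rpow_neg_mul hI (.inl hs), ← EReal.coe_add, EReal.coe_le_coe_iff, hval]
  linarith [sub_mul_log_div_le hγ hD hs, div_mul_cancel₀ γ hD.ne']

section NormedSpace

variable {E : Type*} [NormedAddCommGroup E] [NormedSpace ℝ E] [FiniteDimensional ℝ E]

theorem MeasureTheory.Measure.lintegral_comp_smul [MeasurableSpace E] [BorelSpace E]
    (μ : Measure E) [μ.IsAddHaarMeasure] (f : E → ℝ≥0∞) {r : ℝ} (hr : r ≠ 0) :
    ∫⁻ x, f (r • x) ∂μ = ENNReal.ofReal |(r ^ finrank ℝ E)⁻¹| * ∫⁻ x, f x ∂μ := by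
  rw [← smul_eq_mul, ← lintegral_smul_measure, ← Measure.map_addHaar_smul μ hr]
  exact (lintegral_map_equiv f (Homeomorph.smulOfNeZero r hr).toMeasurableEquiv).symm

namespace Seminorm

variable (p : Seminorm ℝ E)

theorem continuous_of_finiteDimensional : Continuous p :=
  continuousOn_univ.mp (p.convexOn.continuousOn isOpen_univ)

theorem exists_pos_mul_norm_le (hp : ∀ x, p x = 0 → x = 0) :
    ∃ c > 0, ∀ x, c * ‖x‖ ≤ p x := by
  rcases subsingleton_or_nontrivial E with hE | hE
  · exact ⟨1, one_pos, fun x => by simp [Subsingleton.elim x 0]⟩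
  obtain ⟨z, hz, hmin⟩ := (isCompact_sphere (0 : E) 1).exists_isMinOn
    (NormedSpace.sphere_nonempty.mpr zero_le_one) p.continuous_of_finiteDimensional.continuousOn
  have hz1 : ‖z‖ = 1 := by simpa using hz
  refine ⟨p z, (apply_nonneg p z).lt_of_ne' fun h => by simp [hp z h] at hz1, fun x => ?_⟩
  rcases eq_or_ne x 0 with rfl | hx
  · simp
  have hx' : 0 < ‖x‖ := norm_pos_iff.mpr hx
  have hzx : p z ≤ ‖x‖⁻¹ * p x := by
    simpa [map_smul_eq_mul] using hmin (show ‖x‖⁻¹ • x ∈ Metric.sphere (0 : E) 1 by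
      simp [norm_smul, hx'.ne'])
  calc p z * ‖x‖ ≤ ‖x‖⁻¹ * p x * ‖x‖ := by gcongr
    _ = p x := by field_simp

variable [MeasurableSpace E] (μ : Measure E) [μ.IsAddHaarMeasure]

theorem measure_le_one_lt_top (hp : ∀ x, p x = 0 → x = 0) : μ {x | p x ≤ 1} < ∞ := by
  obtain ⟨c, hc, hpc⟩ := p.exists_pos_mul_norm_le hp
  refine (measure_mono fun x (hx : p x ≤ 1) => ?_).trans_lt
    (measure_closedBall_lt_top (x := 0) (r := c⁻¹))
  simpa using (le_inv_mul_iff₀ hc).mpr ((hpc x).trans hx)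

theorem measure_le_one_pos : 0 < μ {x | p x ≤ 1} := by
  have hopen : IsOpen {x | p x < 1} :=
    isOpen_lt p.continuous_of_finiteDimensional continuous_const
  exact (hopen.measure_pos μ ⟨0, by simp⟩).trans_le (measure_mono fun x (hx : p x < 1) => hx.le)

variable [BorelSpace E]

theorem measure_le_one_eq_integral_div_gamma (hp : ∀ x, p x = 0 → x = 0) {k : ℝ} (hk : 0 < k) :
    μ {x | p x ≤ 1} =
      .ofReal ((∫ x, exp (-(p x ^ k)) ∂μ) / Gamma (finrank ℝ E / k + 1)) := by
  have hneg : ∀ x, p (-x) = p x := map_neg_eq_map p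
  have hsmul : ∀ (r : ℝ) x, p (r • x) ≤ |r| * p x := fun r x => (map_smul_eq_mul p r x).le
  rw [← measure_lt_one_eq_integral_div_gamma μ (map_zero p) hneg (map_add_le_add p) (hp _) hsmul
    hk]
  rcases subsingleton_or_nontrivial E with hE | hE
  · congr 1
    ext x
    simp [Subsingleton.elim x 0]
  · exact measure_le_eq_lt μ (map_zero p) hneg (map_add_le_add p) (hp _) hsmul 1

/-- At `s = 0` the left side is `μ univ`; the `ℝ≥0∞` conventions `0 ^ (-γ) = ∞` for `γ > 0` and
`0 ^ 0 = 1` make the formula hold there as well, in every dimension. -/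
theorem lintegral_exp_neg_mul_rpow {k s : ℝ} (hk : 0 < k) (hs : 0 ≤ s) :
    ∫⁻ x, .ofReal (exp (-(s * p x ^ k))) ∂μ =
      .ofReal s ^ (-(finrank ℝ E / k)) * ∫⁻ x, .ofReal (exp (-(p x ^ k))) ∂μ := by
  rcases hs.eq_or_lt with rfl | hs
  · rcases subsingleton_or_nontrivial E with hE | hE
    · simp [Subsingleton.elim _ (0 : E), zero_rpow hk.ne', finrank_zero_of_subsingleton]
    have hJ : ∫⁻ x, .ofReal (exp (-(p x ^ k))) ∂μ ≠ 0 := by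
      refine ((lintegral_pos_iff_support ?_).mpr ?_).ne'
      · have := p.continuous_of_finiteDimensional.measurable
        fun_prop
      · simp [Function.support, exp_pos]
    have hn : (0 : ℝ) < finrank ℝ E := Nat.cast_pos.mpr finrank_pos
    simp [ENNReal.zero_rpow_of_neg (neg_neg_of_pos (div_pos hn hk)), ENNReal.top_mul hJ]
  set r := s ^ (1 / k) with hr
  have hr0 : 0 < r := rpow_pos_of_pos hs _
  have hscale : ∀ x, s * p x ^ k = p (r • x) ^ k := fun x => by
    rw [map_smul_eq_mul, norm_of_nonneg hr0.le, mul_rpow hr0.le (apply_nonneg p x), hr,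
      ← rpow_mul hs.le, one_div_mul_cancel hk.ne', rpow_one]
  have hjac : |(r ^ finrank ℝ E)⁻¹| = s ^ (-(finrank ℝ E / k)) := by
    rw [abs_of_pos (by positivity), hr, ← rpow_natCast, ← rpow_mul hs.le, rpow_neg hs.le]
    ring_nf
  simp_rw [hscale]
  rw [Measure.lintegral_comp_smul μ (fun x => .ofReal (exp (-(p x ^ k)))) hr0.ne', hjac,
    ENNReal.ofReal_rpow_of_pos hs]

end Seminorm

end NormedSpace

theorem stmt10_general
    (d : ℕ) (N : (Fin d → ℝ) → ℝ)
    (hN_smul : ∀ (a : ℝ) (x : Fin d → ℝ), N (a • x) = |a| * N x)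
    (hN_add : ∀ x y : Fin d → ℝ, N (x + y) ≤ N x + N y)
    (hN_eq : ∀ x : Fin d → ℝ, N x = 0 → x = 0)
    (Vd : ℝ) (hVd : Vd = (volume {x : Fin d → ℝ | N x ≤ 1}).toReal)
    (k : ℝ) (hk : 0 < k)
    (h : ℝ)
    (ν : ℝ → ℝ≥0∞)
    (hν : ∀ s : ℝ, ν s = ⨆ y : Fin d → ℝ,
      ∫⁻ x : Fin d → ℝ, ENNReal.ofReal (Real.exp (-(s * N (x - y) ^ k)))) :
    ∀ D : ℝ, 0 < D →
      (h : EReal) - ⨅ s : {s : ℝ // 0 ≤ s}, (((s : ℝ) * D : ℝ) : EReal) + ENNReal.log (ν s) =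
        ((h + Real.log (((d : ℝ) / (k * D)) ^ ((d : ℝ) / k)
            / (Vd * Real.Gamma ((d : ℝ) / k + 1))) - (d : ℝ) / k : ℝ) : EReal) := by
  intro D hD
  let p : Seminorm ℝ (Fin d → ℝ) := .of N hN_add fun a x => by rw [hN_smul, norm_eq_abs]
  have hpN : ⇑p = N := rfl
  have hdim : (finrank ℝ (Fin d → ℝ) : ℝ) = d := by simp
  set I := ∫ x, exp (-(N x ^ k))
  have hΓ : 0 < Gamma (d / k + 1) := Gamma_pos_of_pos (by positivity)
  have hVdI : Vd = I / Gamma (d / k + 1) := by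
    have hball := p.measure_le_one_eq_integral_div_gamma volume hN_eq hk
    rw [hpN, hdim] at hball
    rw [hVd, hball,
      ENNReal.toReal_ofReal (div_nonneg (integral_nonneg fun x => (exp_pos _).le) hΓ.le)]
  have hI : 0 < I := by
    have hVd_pos : 0 < Vd := hVd ▸ ENNReal.toReal_pos (p.measure_le_one_pos volume).ne'
      (p.measure_le_one_lt_top volume hN_eq).ne
    rw [hVdI] at hVd_pos
    exact (div_pos_iff_of_pos_right hΓ).mp hVd_pos
  have hνI : ∀ s, 0 ≤ s → ν s = ENNReal.ofReal s ^ (-(d / k : ℝ)) * ENNReal.ofReal I := by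
    intro s hs
    rw [hν, iSup_congr fun y =>
        lintegral_sub_right_eq_self (fun x => ENNReal.ofReal (exp (-(s * N x ^ k)))) y,
      iSup_const, ← hpN, p.lintegral_exp_neg_mul_rpow volume hk hs, hdim, hpN,
      ofReal_integral_eq_lintegral_ofReal (Integrable.of_integral_ne_zero hI.ne')
        (Filter.Eventually.of_forall fun x => (exp_pos _).le)]
  rw [iInf_congr fun s => by rw [hνI s s.2], iInf_mul_add_log_rpow_neg_mul (by positivity) hD hI,
    ← EReal.coe_sub, EReal.coe_eq_coe_iff, hVdI, div_mul_cancel₀ _ hΓ.ne',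
    show (d : ℝ) / (k * D) = d / k / D by ring]
  ring

/-- For a continuous random variable on `ℝ^d` with density `f` and finite
differential entropy `h`, distortion `ρ(x,y) = N(x−y)^k` for a norm `N` with unit-ball
Lebesgue measure `V_d`, the Shannon lower bound is explicit:
`h − inf_{s ≥ 0}(sD + log ν(s)) = h + log((d/(kD))^{d/k} / (V_d Γ(d/k+1))) − d/k`. -/
theorem stmt10
    (d : ℕ) (N : (Fin d → ℝ) → ℝ)
    (hN_smul : ∀ (a : ℝ) (x : Fin d → ℝ), N (a • x) = |a| * N x)
    (hN_add : ∀ x y : Fin d → ℝ, N (x + y) ≤ N x + N y)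
    (hN_eq : ∀ x : Fin d → ℝ, N x = 0 → x = 0)
    (Vd : ℝ) (hVd : Vd = (volume {x : Fin d → ℝ | N x ≤ 1}).toReal)
    (k : ℝ) (hk : 0 < k)
    (μX : Measure (Fin d → ℝ)) [IsProbabilityMeasure μX]
    (f : (Fin d → ℝ) → ℝ) (hf_nonneg : ∀ x, 0 ≤ f x) (hf_meas : Measurable f)
    (hμX : μX = volume.withDensity (fun x => ENNReal.ofReal (f x)))
    (h : ℝ)
    (hint : Integrable (fun x => f x * Real.log (f x)) volume)
    (hh : h = -∫ x : Fin d → ℝ, f x * Real.log (f x))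
    (ν : ℝ → ℝ≥0∞)
    (hν : ∀ s : ℝ, ν s = ⨆ y : Fin d → ℝ,
      ∫⁻ x : Fin d → ℝ, ENNReal.ofReal (Real.exp (-(s * N (x - y) ^ k)))) :
    ∀ D : ℝ, 0 < D →
      (h : EReal) - ⨅ s : {s : ℝ // 0 ≤ s}, (((s : ℝ) * D : ℝ) : EReal) + ENNReal.log (ν s) =
        ((h + Real.log (((d : ℝ) / (k * D)) ^ ((d : ℝ) / k)
            / (Vd * Real.Gamma ((d : ℝ) / k + 1))) - (d : ℝ) / k : ℝ) : EReal) :=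
  stmt10_general d N hN_smul hN_add hN_eq Vd hVd k hk h ν hν
end

section
/- Let S¹ := {y ∈ ℝ² : ‖y‖₂ = 1} denote the unit circle, let ℋ¹ denote the 1-dimensional Hausdorff measure on ℝ², and let μ_X := ℋ¹|_{S¹} / (2π) be the uniform distribution on S¹. Then for every δ̂ ∈ (0,1], every δ ∈ (0, δ̂), and every x ∈ ℝ², μ_X( { y ∈ ℝ² : ‖y − x‖₂ ≤ δ } ) ≤ ( arcsin(δ̂) / (π · δ̂) ) · δ. In particular, μ_X is subregular of dimension 1 with constants δ₀ = δ̂ and c = arcsin(δ̂)/(π δ̂) for the distortion function ρ(x,y) = ‖x − y‖₂². -/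
/-!
A unit vector within distance `δ < 1` of `x` makes an angle of at most `arcsin δ` with `x`
(the extreme case is a tangent from `x` to the circle), so the unit circle meets the closed
`δ`-ball about `x` inside an arc of length `2 arcsin δ`. That arc is the image of an interval
under the `1`-Lipschitz map `θ ↦ (cos θ, sin θ)`, so its `ℋ¹`-measure is at most its length.
Finally, concavity of `sin` on `[0, π]` gives `arcsin δ ≤ (δ / δ̂) arcsin δ̂` for
`0 ≤ δ ≤ δ̂ ≤ 1`, which turns `2 arcsin δ / 2π` into the claimed bound.
-/

open MeasureTheory Real Set
open scoped ENNReal NNReal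
open Metric
open scoped InnerProductSpace

noncomputable def angleVec (θ : ℝ) : EuclideanSpace ℝ (Fin 2) := !₂[cos θ, sin θ]

@[simp] lemma angleVec_apply_zero (θ : ℝ) : angleVec θ 0 = cos θ := rfl

@[simp] lemma angleVec_apply_one (θ : ℝ) : angleVec θ 1 = sin θ := rfl

lemma EuclideanSpace.norm_sq_fin_two (y : EuclideanSpace ℝ (Fin 2)) :
    ‖y‖ ^ 2 = y 0 ^ 2 + y 1 ^ 2 := by
  simp [EuclideanSpace.real_norm_sq_eq, Fin.sum_univ_two]

lemma inner_angleVec (y : EuclideanSpace ℝ (Fin 2)) (φ : ℝ) :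
    ⟪y, angleVec φ⟫_ℝ = y 0 * cos φ + y 1 * sin φ := by
  simp [PiLp.inner_apply, Fin.sum_univ_two, mul_comm]

lemma lipschitzWith_angleVec : LipschitzWith 1 angleVec := by
  refine LipschitzWith.of_dist_le_mul fun a b ↦ ?_
  rw [NNReal.coe_one, one_mul, EuclideanSpace.dist_eq, Real.dist_eq, ← Real.sqrt_sq_eq_abs]
  gcongr
  -- the squared chord is `2 - 2 cos (a - b)`, and `1 - t² / 2 ≤ cos t`
  have hcos := one_sub_sq_div_two_le_cos (x := a - b)
  simp only [Fin.sum_univ_two, angleVec_apply_zero, angleVec_apply_one, Real.dist_eq, sq_abs]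
  nlinarith [cos_sub a b, sin_sq_add_cos_sq a, sin_sq_add_cos_sq b]

lemma hausdorffMeasure_angleVec_image_Icc_le (a b : ℝ) :
    μH[1] (angleVec '' Icc a b) ≤ ENNReal.ofReal (b - a) :=
  calc μH[1] (angleVec '' Icc a b) ≤ (1 : ℝ≥0) ^ (1 : ℝ) * μH[1] (Icc a b) :=
        lipschitzWith_angleVec.hausdorffMeasure_image_le zero_le_one _
    _ = ENNReal.ofReal (b - a) := by simp [hausdorffMeasure_real]

lemma exists_angleVec_eq {u : EuclideanSpace ℝ (Fin 2)} (hu : ‖u‖ = 1) :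
    ∃ φ, angleVec φ = u := by
  set z : ℂ := u 0 + u 1 * Complex.I
  have hz : ‖z‖ = 1 := by
    rw [Complex.norm_add_mul_I, ← EuclideanSpace.norm_sq_fin_two, hu, one_pow, sqrt_one]
  refine ⟨z.arg, ?_⟩
  ext i
  fin_cases i
  · simp [Complex.cos_arg (norm_ne_zero_iff.1 (hz ▸ one_ne_zero)), hz, z]
  · simp [Complex.sin_arg, hz, z]

lemma angleVec_add_eq {y : EuclideanSpace ℝ (Fin 2)} {φ ψ : ℝ}
    (hcos : cos ψ = y 0 * cos φ + y 1 * sin φ) (hsin : sin ψ = y 1 * cos φ - y 0 * sin φ) :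
    angleVec (φ + ψ) = y := by
  ext i
  fin_cases i
  · show cos (φ + ψ) = y 0
    rw [cos_add, hcos, hsin]
    linear_combination y 0 * sin_sq_add_cos_sq φ
  · show sin (φ + ψ) = y 1
    rw [sin_add, hcos, hsin]
    linear_combination y 1 * sin_sq_add_cos_sq φ

lemma sqrt_one_sub_sq_mul_norm_le_inner {E : Type*} [NormedAddCommGroup E]
    [InnerProductSpace ℝ E] {x y : E} {δ : ℝ} (hy : ‖y‖ = 1) (hδ : δ ≤ 1) (hxy : ‖y - x‖ ≤ δ) :
    √(1 - δ ^ 2) * ‖x‖ ≤ ⟪y, x⟫_ℝ := by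
  have hδ0 : 0 ≤ δ := (norm_nonneg _).trans hxy
  have hq : √(1 - δ ^ 2) ^ 2 = 1 - δ ^ 2 := sq_sqrt (by nlinarith)
  have hsq : ‖y - x‖ ^ 2 ≤ δ ^ 2 := by gcongr
  rw [norm_sub_sq_real, hy] at hsq
  nlinarith [sq_nonneg (√(1 - δ ^ 2) - ‖x‖)]

lemma exists_abs_le_arcsin_cos_sin_eq {a b δ : ℝ} (hδ0 : 0 ≤ δ) (hδ1 : δ ≤ 1)
    (hab : a ^ 2 + b ^ 2 = 1) (ha : √(1 - δ ^ 2) ≤ a) :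
    ∃ ψ, |ψ| ≤ arcsin δ ∧ cos ψ = a ∧ sin ψ = b := by
  have ha0 : 0 ≤ a := (sqrt_nonneg _).trans ha
  have hb : |b| ≤ δ := by
    refine abs_le_of_sq_le_sq ?_ hδ0
    have hq := sq_sqrt (by nlinarith : (0 : ℝ) ≤ 1 - δ ^ 2)
    nlinarith [mul_self_le_mul_self (sqrt_nonneg _) ha]
  obtain ⟨hb₁, hb₂⟩ := abs_le.1 hb
  refine ⟨arcsin b, abs_le.2 ⟨?_, arcsin_le_arcsin hb₂⟩, ?_, sin_arcsin (by linarith) (by linarith)⟩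
  · rw [← arcsin_neg]
    exact arcsin_le_arcsin hb₁
  · rw [cos_arcsin, show 1 - b ^ 2 = a ^ 2 by linarith, sqrt_sq ha0]

lemma exists_closedBall_inter_sphere_subset_angleVec_image (x : EuclideanSpace ℝ (Fin 2))
    {δ : ℝ} (hδ : δ < 1) :
    ∃ φ, closedBall x δ ∩ sphere 0 1 ⊆ angleVec '' Icc (φ - arcsin δ) (φ + arcsin δ) := by
  rcases eq_or_ne x 0 with rfl | hx
  · refine ⟨0, fun y ⟨hyx, hy⟩ ↦ ?_⟩
    rw [mem_closedBall_zero_iff] at hyx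
    rw [mem_sphere_zero_iff_norm] at hy
    linarith
  have hu : ‖(‖x‖⁻¹ : ℝ) • x‖ = 1 := norm_smul_inv_norm hx
  obtain ⟨φ, hφ⟩ := exists_angleVec_eq hu
  refine ⟨φ, fun y ⟨hyx, hy⟩ ↦ ?_⟩
  rw [mem_closedBall, dist_eq_norm] at hyx
  rw [mem_sphere_zero_iff_norm] at hy
  have hinner : √(1 - δ ^ 2) ≤ y 0 * cos φ + y 1 * sin φ := by
    have h := sqrt_one_sub_sq_mul_norm_le_inner hy hδ.le hyx
    rwa [← smul_inv_smul₀ (norm_ne_zero_iff.2 hx) x, ← hφ, real_inner_smul_right,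
      inner_angleVec, norm_smul, norm_norm, hφ, hu, mul_one, mul_comm,
      mul_le_mul_iff_right₀ (norm_pos_iff.2 hx)] at h
  have hunit : (y 0 * cos φ + y 1 * sin φ) ^ 2 + (y 1 * cos φ - y 0 * sin φ) ^ 2 = 1 := by
    have hy2 := EuclideanSpace.norm_sq_fin_two y
    rw [hy, one_pow] at hy2
    linear_combination (y 0 ^ 2 + y 1 ^ 2) * sin_sq_add_cos_sq φ - hy2
  obtain ⟨ψ, hψ, hcos, hsin⟩ :=
    exists_abs_le_arcsin_cos_sin_eq ((norm_nonneg _).trans hyx) hδ.le hunit hinner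
  exact ⟨φ + ψ, ⟨by linarith [neg_abs_le ψ], by linarith [le_abs_self ψ]⟩,
    angleVec_add_eq hcos hsin⟩

lemma hausdorffMeasure_closedBall_inter_sphere_le (x : EuclideanSpace ℝ (Fin 2)) {δ : ℝ}
    (hδ : δ < 1) : μH[1] (closedBall x δ ∩ sphere 0 1) ≤ ENNReal.ofReal (2 * arcsin δ) := by
  obtain ⟨φ, hsub⟩ := exists_closedBall_inter_sphere_subset_angleVec_image x hδ
  calc μH[1] (closedBall x δ ∩ sphere 0 1)
      ≤ μH[1] (angleVec '' Icc (φ - arcsin δ) (φ + arcsin δ)) := measure_mono hsub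
    _ ≤ ENNReal.ofReal (2 * arcsin δ) := by
      convert hausdorffMeasure_angleVec_image_Icc_le _ _ using 2
      ring

lemma mul_sin_le_sin_mul {a t : ℝ} (ha₀ : 0 ≤ a) (ha₁ : a ≤ 1) (ht₀ : 0 ≤ t) (ht : t ≤ π) :
    a * sin t ≤ sin (a * t) := by
  have h := strictConcaveOn_sin_Icc.concaveOn.2 (left_mem_Icc.2 pi_pos.le) ⟨ht₀, ht⟩
    (sub_nonneg.2 ha₁) ha₀ (sub_add_cancel 1 a)
  simpa using h

lemma arcsin_mul_le {a x : ℝ} (ha₀ : 0 ≤ a) (ha₁ : a ≤ 1) (hx₀ : 0 ≤ x) (hx₁ : x ≤ 1) :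
    arcsin (a * x) ≤ a * arcsin x := by
  have ht₀ : 0 ≤ arcsin x := arcsin_nonneg.2 hx₀
  have ht : arcsin x ≤ π / 2 := arcsin_le_pi_div_two x
  have hsin : a * x ≤ sin (a * arcsin x) := by
    simpa [sin_arcsin (by linarith) hx₁] using
      mul_sin_le_sin_mul ha₀ ha₁ ht₀ (ht.trans (by linarith [pi_pos]))
  calc arcsin (a * x) ≤ arcsin (sin (a * arcsin x)) := arcsin_le_arcsin hsin
    _ = a * arcsin x := arcsin_sin (by nlinarith [pi_pos]) (by nlinarith)

/-- Let `μX = ℋ¹|_{S¹} / (2π)` be the uniform distribution on the unit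
circle `S¹ ⊆ ℝ²`. Then for every `δ̂ ∈ (0,1]`, every `δ ∈ (0,δ̂)`, and every `x ∈ ℝ²`,
`μX({y : ‖y − x‖₂ ≤ δ}) ≤ (arcsin δ̂ / (π δ̂)) δ`; i.e. `μX` is subregular of dimension 1
with constants `δ₀ = δ̂` and `c = arcsin δ̂ / (π δ̂)` for `ρ(x,y) = ‖x − y‖₂²`. -/
theorem stmt14
    (μX : Measure (EuclideanSpace ℝ (Fin 2)))
    (hμX : μX = (ENNReal.ofReal (2 * Real.pi))⁻¹ •
      (μH[1].restrict {y : EuclideanSpace ℝ (Fin 2) | ‖y‖ = 1})) :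
    ∀ δhat : ℝ, 0 < δhat → δhat ≤ 1 → ∀ δ : ℝ, 0 < δ → δ < δhat →
      ∀ x : EuclideanSpace ℝ (Fin 2),
        μX {y : EuclideanSpace ℝ (Fin 2) | ‖y - x‖ ≤ δ} ≤
          ENNReal.ofReal (Real.arcsin δhat / (Real.pi * δhat) * δ) := by
  intro δhat hδhat₀ hδhat₁ δ hδ₀ hδ x
  have hball : {y | ‖y - x‖ ≤ δ} = closedBall x δ := by ext; simp [dist_eq_norm]
  have hsphere : {y : EuclideanSpace ℝ (Fin 2) | ‖y‖ = 1} = sphere 0 1 := by ext; simp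
  have harcsin : arcsin δ ≤ δ / δhat * arcsin δhat := by
    simpa [div_mul_cancel₀ δ hδhat₀.ne'] using
      arcsin_mul_le (a := δ / δhat) (by positivity) ((div_le_one hδhat₀).2 hδ.le) hδhat₀.le hδhat₁
  rw [hμX, hball, hsphere, Measure.smul_apply, smul_eq_mul,
    Measure.restrict_apply measurableSet_closedBall]
  calc (ENNReal.ofReal (2 * π))⁻¹ * μH[1] (closedBall x δ ∩ sphere 0 1)
      ≤ (ENNReal.ofReal (2 * π))⁻¹ * ENNReal.ofReal (2 * arcsin δ) := by
        gcongr
        exact hausdorffMeasure_closedBall_inter_sphere_le x (hδ.trans_le hδhat₁)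
    _ = ENNReal.ofReal (arcsin δ / π) := by
        rw [← ENNReal.ofReal_inv_of_pos (by positivity), ← ENNReal.ofReal_mul (by positivity)]
        congr 1
        field_simp
    _ ≤ ENNReal.ofReal (arcsin δhat / (π * δhat) * δ) := by
        gcongr
        calc arcsin δ / π ≤ δ / δhat * arcsin δhat / π := by gcongr
          _ = arcsin δhat / (π * δhat) * δ := by field_simp
end

section
/- Let C ⊆ ℝ be a nonempty compact set satisfying C = (1/3)·C ∪ ((1/3)·C + 2/3) (i.e., C is the middle third Cantor set), and let m := log 2 / log 3. Then for every x ∈ ℝ and every δ > 0, ℋ^m( { y ∈ C : |y − x| < δ } ) ≤ 3 · ℋ^m(C) · δ^m, where ℋ^m denotes the m-dimensional Hausdorff measure on ℝ. -/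
/-!
Write `μ = μH[m]`, where `3 ^ m = 2`. Both similarities are `1/3`-Lipschitz, hence map a set onto
one of at most half its measure, and splitting `C ∩ B(x, δ)` along `C = s₁ C ∪ s₂ C` gives
`2 μ(C ∩ B(x, δ)) ≤ μ(C ∩ B(3x, 3δ)) + μ(C ∩ B(3x - 2, 3δ))`, while `(3δ) ^ m = 2 δ ^ m`.
As `C ⊆ [0, 1]`, a ball of radius `δ < 1/3` either misses one half of `C`, and the bound at radius
`3δ` rescales to radius `δ`, or it straddles the gap `(1/3, 2/3)`, and then the two rescaled balls
lie in balls of radius `3δ` about the endpoints `1` and `0`. A ball about an endpoint only ever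
meets one half, so the same rescaling gives it the constant `3/2`, and the two halves add up to `3`.
Large radii are trivial since `δ ^ m ≥ min δ 1`, and tripling reaches them in finitely many steps.
-/

open MeasureTheory Metric Real Set
open scoped ENNReal NNReal

theorem forall_pos_of_forall_ge_of_imp_mul {P : ℝ → Prop} {r c : ℝ} (hr : 1 < r)
    (large : ∀ δ, c ≤ δ → P δ) (step : ∀ δ, 0 < δ → δ < c → P (r * δ) → P δ) :
    ∀ δ, 0 < δ → P δ := by
  suffices h : ∀ n : ℕ, ∀ δ, 0 < δ → c ≤ r ^ n * δ → P δ by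
    intro δ hδ
    obtain ⟨n, hn⟩ := pow_unbounded_of_one_lt (c / δ) hr
    exact h n δ hδ ((div_le_iff₀ hδ).1 hn.le)
  intro n
  induction n with
  | zero => intro δ _ h; exact large δ (by simpa using h)
  | succ n ih =>
    intro δ hδ h
    by_cases hcδ : c ≤ δ
    · exact large δ hcδ
    · refine step δ hδ (not_le.1 hcδ) (ih _ (mul_pos (by linarith) hδ) ?_)
      rwa [pow_succ, mul_assoc] at h

lemma le_rpow_of_le_of_le_one {c δ m : ℝ} (hc : 0 < c) (hc1 : c ≤ 1) (hcδ : c ≤ δ)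
    (hm0 : 0 ≤ m) (hm1 : m ≤ 1) : c ≤ δ ^ m :=
  calc c = c ^ (1 : ℝ) := (rpow_one c).symm
    _ ≤ c ^ m := rpow_le_rpow_of_exponent_ge hc hc1 hm1
    _ ≤ δ ^ m := rpow_le_rpow hc.le hcδ hm0

lemma measure_inter_le_ofReal_mul {X : Type*} [MeasurableSpace X] (μ : Measure X) (s t : Set X)
    {k : ℝ} (hk : 1 ≤ k) : μ (s ∩ t) ≤ ENNReal.ofReal k * μ s :=
  (measure_mono inter_subset_left).trans (le_mul_of_one_le_left' (ENNReal.one_le_ofReal.2 hk))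

lemma lipschitzWith_third_mul_add (c : ℝ) : LipschitzWith 3⁻¹ (fun y : ℝ => 1 / 3 * y + c) := by
  refine LipschitzWith.of_dist_le_mul fun p q => le_of_eq ?_
  rw [Real.dist_eq, Real.dist_eq, add_sub_add_right_eq_sub, ← mul_sub, abs_mul]
  norm_num

section SimilarityDimension

variable {m : ℝ}

lemma pos_of_three_rpow_eq_two (hm : (3 : ℝ) ^ m = 2) : 0 < m := by
  rw [← rpow_lt_rpow_left_iff (by norm_num : (1 : ℝ) < 3), rpow_zero, hm]
  norm_num

lemma le_one_of_three_rpow_eq_two (hm : (3 : ℝ) ^ m = 2) : m ≤ 1 := by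
  rw [← rpow_le_rpow_left_iff (by norm_num : (1 : ℝ) < 3), rpow_one, hm]
  norm_num

lemma ofReal_mul_three_mul_rpow (hm : (3 : ℝ) ^ m = 2) (K : ℝ) {δ : ℝ} (hδ : 0 ≤ δ) :
    ENNReal.ofReal (K * (3 * δ) ^ m) = 2 * ENNReal.ofReal (K * δ ^ m) := by
  rw [mul_rpow zero_le_three hδ, hm, mul_left_comm, ENNReal.ofReal_mul zero_le_two,
    ENNReal.ofReal_ofNat]

lemma two_mul_hausdorffMeasure_image_le {X Y : Type*} [EMetricSpace X] [EMetricSpace Y]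
    [MeasurableSpace X] [BorelSpace X] [MeasurableSpace Y] [BorelSpace Y]
    (hm : (3 : ℝ) ^ m = 2) {f : X → Y} (hf : LipschitzWith 3⁻¹ f) (s : Set X) :
    2 * μH[m] (f '' s) ≤ μH[m] s := by
  have hcoef : ((3⁻¹ : ℝ≥0) : ℝ≥0∞) ^ m = 2⁻¹ := by
    rw [ENNReal.coe_inv three_ne_zero, ENNReal.inv_rpow, ENNReal.coe_ofNat,
      ← ENNReal.ofReal_ofNat 3, ENNReal.ofReal_rpow_of_pos zero_lt_three, hm, ENNReal.ofReal_ofNat]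
  calc 2 * μH[m] (f '' s) ≤ 2 * (2⁻¹ * μH[m] s) := by
        gcongr
        exact hcoef ▸ hf.hausdorffMeasure_image_le (pos_of_three_rpow_eq_two hm).le s
    _ = μH[m] s := by
        rw [← mul_assoc, ENNReal.mul_inv_cancel two_ne_zero ENNReal.ofNat_ne_top, one_mul]

end SimilarityDimension

section UnitInterval

variable {C : Set ℝ}

lemma subset_Icc_zero_one_of_eq_union_image (hCb : Bornology.IsBounded C)
    (hC : C = (fun y => (1 / 3 : ℝ) * y) '' C ∪ (fun y => (1 / 3 : ℝ) * y + 2 / 3) '' C) :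
    C ⊆ Icc 0 1 := by
  rcases C.eq_empty_or_nonempty with rfl | hne
  · exact empty_subset _
  have hsup : sSup C ≤ 1 / 3 * sSup C + 2 / 3 := by
    refine csSup_le hne fun y hy => ?_
    rw [hC] at hy
    rcases hy with ⟨z, hz, rfl⟩ | ⟨z, hz, rfl⟩ <;> linarith [le_csSup hCb.bddAbove hz]
  have hinf : 1 / 3 * sInf C ≤ sInf C := by
    refine le_csInf hne fun y hy => ?_
    rw [hC] at hy
    rcases hy with ⟨z, hz, rfl⟩ | ⟨z, hz, rfl⟩ <;> linarith [csInf_le hCb.bddBelow hz]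
  intro y hy
  exact ⟨by linarith [csInf_le hCb.bddBelow hy], by linarith [le_csSup hCb.bddAbove hy]⟩

lemma inter_ball_subset_inter_ball_zero (hC01 : C ⊆ Icc 0 1) {z r s : ℝ} (h : z + r ≤ s) :
    C ∩ ball z r ⊆ C ∩ ball 0 s := by
  rintro y ⟨hyC, hy⟩
  rw [Real.ball_eq_Ioo] at hy ⊢
  exact ⟨hyC, by linarith [(hC01 hyC).1, hy.2], by linarith [hy.2]⟩

lemma inter_ball_subset_inter_ball_one (hC01 : C ⊆ Icc 0 1) {z r s : ℝ} (h : 1 - z + r ≤ s) :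
    C ∩ ball z r ⊆ C ∩ ball 1 s := by
  rintro y ⟨hyC, hy⟩
  rw [Real.ball_eq_Ioo] at hy ⊢
  exact ⟨hyC, by linarith [hy.1], by linarith [(hC01 hyC).2, hy.1]⟩

lemma hausdorffMeasure_inter_ball_eq_zero_of_add_nonpos (hC01 : C ⊆ Icc 0 1) {z r m : ℝ}
    (h : z + r ≤ 0) : μH[m] (C ∩ ball z r) = 0 :=
  measure_mono_null (inter_ball_subset_inter_ball_zero hC01 h) (by simp)

lemma hausdorffMeasure_inter_ball_eq_zero_of_le_sub (hC01 : C ⊆ Icc 0 1) {z r m : ℝ}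
    (h : 1 ≤ z - r) : μH[m] (C ∩ ball z r) = 0 :=
  measure_mono_null (inter_ball_subset_inter_ball_one hC01 (s := 0) (by linarith)) (by simp)

end UnitInterval

section CantorSet

variable {C : Set ℝ} {m : ℝ}

lemma two_mul_hausdorffMeasure_inter_ball_le (hm : (3 : ℝ) ^ m = 2)
    (hC : C = (fun y => (1 / 3 : ℝ) * y) '' C ∪ (fun y => (1 / 3 : ℝ) * y + 2 / 3) '' C)
    (x δ : ℝ) :
    2 * μH[m] (C ∩ ball x δ) ≤
      μH[m] (C ∩ ball (3 * x) (3 * δ)) + μH[m] (C ∩ ball (3 * x - 2) (3 * δ)) := by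
  have hpre₁ : (fun y => (1 / 3 : ℝ) * y) ⁻¹' ball x δ = ball (3 * x) (3 * δ) := by
    ext y
    simp only [mem_preimage, Real.ball_eq_Ioo, mem_Ioo]
    constructor <;> rintro ⟨h₁, h₂⟩ <;> constructor <;> linarith
  have hpre₂ : (fun y => (1 / 3 : ℝ) * y + 2 / 3) ⁻¹' ball x δ = ball (3 * x - 2) (3 * δ) := by
    ext y
    simp only [mem_preimage, Real.ball_eq_Ioo, mem_Ioo]
    constructor <;> rintro ⟨h₁, h₂⟩ <;> constructor <;> linarith
  have hsplit : C ∩ ball x δ = (fun y => (1 / 3 : ℝ) * y) '' (C ∩ ball (3 * x) (3 * δ)) ∪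
      (fun y => (1 / 3 : ℝ) * y + 2 / 3) '' (C ∩ ball (3 * x - 2) (3 * δ)) := by
    rw [← hpre₁, ← hpre₂, image_inter_preimage, image_inter_preimage, ← union_inter_distrib_right,
      ← hC]
  calc 2 * μH[m] (C ∩ ball x δ)
      ≤ 2 * μH[m] ((fun y => (1 / 3 : ℝ) * y) '' (C ∩ ball (3 * x) (3 * δ))) +
          2 * μH[m] ((fun y => (1 / 3 : ℝ) * y + 2 / 3) '' (C ∩ ball (3 * x - 2) (3 * δ))) := by
        rw [hsplit, ← mul_add]
        gcongr
        exact measure_union_le _ _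
    _ ≤ _ := by
        gcongr
        · exact two_mul_hausdorffMeasure_image_le hm (by simpa using lipschitzWith_third_mul_add 0) _
        · exact two_mul_hausdorffMeasure_image_le hm (lipschitzWith_third_mul_add _) _

theorem hausdorffMeasure_inter_ball_endpoint_le (hm : (3 : ℝ) ^ m = 2)
    (hC : C = (fun y => (1 / 3 : ℝ) * y) '' C ∪ (fun y => (1 / 3 : ℝ) * y + 2 / 3) '' C)
    (hC01 : C ⊆ Icc 0 1) {e : ℝ} (he : e = 0 ∨ e = 1) :
    ∀ a, 0 < a → μH[m] (C ∩ ball e a) ≤ ENNReal.ofReal (3 / 2 * a ^ m) * μH[m] C := by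
  have hm0 := pos_of_three_rpow_eq_two hm
  refine forall_pos_of_forall_ge_of_imp_mul (by norm_num : (1 : ℝ) < 3) (c := 2 / 3)
    (fun a ha => measure_inter_le_ofReal_mul _ _ _ ?_) fun a ha ha' ih => ?_
  · have := le_rpow_of_le_of_le_one (by norm_num) (by norm_num) ha hm0.le
      (le_one_of_three_rpow_eq_two hm)
    linarith
  refine (ENNReal.mul_le_mul_iff_right two_ne_zero ENNReal.ofNat_ne_top).1 <|
    (two_mul_hausdorffMeasure_inter_ball_le hm hC e a).trans ?_
  rw [← mul_assoc, ← ofReal_mul_three_mul_rpow hm _ ha.le]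
  rcases he with rfl | rfl
  · rw [hausdorffMeasure_inter_ball_eq_zero_of_add_nonpos hC01 (z := 3 * 0 - 2) (by linarith),
      add_zero, mul_zero]
    exact ih
  · rw [hausdorffMeasure_inter_ball_eq_zero_of_le_sub hC01 (z := 3 * 1) (by linarith), zero_add,
      show (3 : ℝ) * 1 - 2 = 1 by norm_num]
    exact ih

theorem hausdorffMeasure_inter_ball_le (hm : (3 : ℝ) ^ m = 2)
    (hC : C = (fun y => (1 / 3 : ℝ) * y) '' C ∪ (fun y => (1 / 3 : ℝ) * y + 2 / 3) '' C)
    (hC01 : C ⊆ Icc 0 1) :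
    ∀ δ, 0 < δ → ∀ x, μH[m] (C ∩ ball x δ) ≤ ENNReal.ofReal (3 * δ ^ m) * μH[m] C := by
  have hm0 := pos_of_three_rpow_eq_two hm
  refine forall_pos_of_forall_ge_of_imp_mul (by norm_num : (1 : ℝ) < 3) (c := 1 / 3)
    (fun δ hδ x => measure_inter_le_ofReal_mul _ _ _ ?_) fun δ hδ hδ' ih x => ?_
  · have := le_rpow_of_le_of_le_one (by norm_num) (by norm_num) hδ hm0.le
      (le_one_of_three_rpow_eq_two hm)
    linarith
  refine (ENNReal.mul_le_mul_iff_right two_ne_zero ENNReal.ofNat_ne_top).1 <|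
    (two_mul_hausdorffMeasure_inter_ball_le hm hC x δ).trans ?_
  rw [← mul_assoc, ← ofReal_mul_three_mul_rpow hm _ hδ.le]
  by_cases hright : x + δ ≤ 2 / 3
  · rw [hausdorffMeasure_inter_ball_eq_zero_of_add_nonpos hC01 (z := 3 * x - 2) (by linarith),
      add_zero]
    exact ih (3 * x)
  by_cases hleft : 1 / 3 ≤ x - δ
  · rw [hausdorffMeasure_inter_ball_eq_zero_of_le_sub hC01 (z := 3 * x) (by linarith), zero_add]
    exact ih (3 * x - 2)
  calc μH[m] (C ∩ ball (3 * x) (3 * δ)) + μH[m] (C ∩ ball (3 * x - 2) (3 * δ))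
      ≤ μH[m] (C ∩ ball 1 (3 * δ)) + μH[m] (C ∩ ball 0 (3 * δ)) := by
        refine add_le_add (measure_mono (inter_ball_subset_inter_ball_one hC01 ?_))
          (measure_mono (inter_ball_subset_inter_ball_zero hC01 ?_)) <;> linarith
    _ ≤ ENNReal.ofReal (3 / 2 * (3 * δ) ^ m) * μH[m] C +
          ENNReal.ofReal (3 / 2 * (3 * δ) ^ m) * μH[m] C :=
        add_le_add (hausdorffMeasure_inter_ball_endpoint_le hm hC hC01 (.inr rfl) _ (by positivity))
          (hausdorffMeasure_inter_ball_endpoint_le hm hC hC01 (.inl rfl) _ (by positivity))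
    _ = ENNReal.ofReal (3 * (3 * δ) ^ m) * μH[m] C := by
        rw [← add_mul, ← ENNReal.ofReal_add (by positivity) (by positivity), ← add_mul]
        norm_num

end CantorSet

theorem stmt16_general
    (C : Set ℝ) (hCcompact : IsCompact C)
    (hC : C = (fun y => (1 / 3 : ℝ) * y) '' C ∪ (fun y => (1 / 3 : ℝ) * y + 2 / 3) '' C)
    (m : ℝ) (hm : m = Real.log 2 / Real.log 3) :
    ∀ (x : ℝ) (δ : ℝ), 0 < δ →
      μH[m] {y : ℝ | y ∈ C ∧ |y - x| < δ} ≤ 3 * μH[m] C * ENNReal.ofReal (δ ^ m) := by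
  intro x δ hδ
  have h3m : (3 : ℝ) ^ m = 2 := hm ▸ rpow_logb (by norm_num) (by norm_num) two_pos
  have hC01 := subset_Icc_zero_one_of_eq_union_image hCcompact.isBounded hC
  have hball : {y : ℝ | y ∈ C ∧ |y - x| < δ} = C ∩ ball x δ := by
    ext y
    simp [Real.dist_eq]
  rw [hball, mul_right_comm, ← ENNReal.ofReal_ofNat, ← ENNReal.ofReal_mul zero_le_three]
  exact hausdorffMeasure_inter_ball_le h3m hC hC01 δ hδ x

/-- Let `C ⊆ ℝ` be the middle third Cantor set, i.e. the nonempty compact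
set with `C = (1/3)·C ∪ ((1/3)·C + 2/3)`, and let `m = log 2 / log 3`. Then for every
`x ∈ ℝ` and `δ > 0`, `ℋ^m({y ∈ C : |y − x| < δ}) ≤ 3 ℋ^m(C) δ^m`. -/
theorem stmt16
    (C : Set ℝ) (hCne : C.Nonempty) (hCcompact : IsCompact C)
    (hC : C = (fun y => (1 / 3 : ℝ) * y) '' C ∪ (fun y => (1 / 3 : ℝ) * y + 2 / 3) '' C)
    (m : ℝ) (hm : m = Real.log 2 / Real.log 3) :
    ∀ (x : ℝ) (δ : ℝ), 0 < δ →
      μH[m] {y : ℝ | y ∈ C ∧ |y - x| < δ} ≤ 3 * μH[m] C * ENNReal.ofReal (δ ^ m) :=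
  stmt16_general C hCcompact hC m hm
end

section
/- Let C ⊆ ℝ be the middle third Cantor set, i.e., the unique nonempty compact set with C = (1/3)·C ∪ ((1/3)·C + 2/3), let m := log 2 / log 3, assume 0 < ℋ^m(C) < ∞, and let X be a random variable with distribution μ_X := ℋ^m|_C / ℋ^m(C). Consider the distortion function ρ(x,y) := |x − y|² on ℝ × ℝ, and define the rate-distortion function R(D) := inf { I(π) : π a probability measure on ℝ × ℝ with first marginal μ_X and ∫ ρ dπ ≤ D }, where I(π) is the Kullback–Leibler divergence of π with respect to the product of its marginals (and ∞ if not absolutely continuous). Then with σ := log 2 / log 9, for every D > 0, R(D) ≥ σ · log(σ/D) − σ − log( 3 · Γ(σ + 1) ). -/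
/-!
For `u = 3⁻ᵏ < δ ≤ 3u`, the self-similarity of `C` splits it into `2ᵏ` pieces `u • C + a`, each
of `ℋ^m`-measure `u^m ℋ^m(C)`, whose left endpoints are `2u`-separated; a ball of radius `δ`
therefore meets at most `δ/u + 3/2` of them, and concavity of `t ↦ t^m` (with `3^m = 2`) turns
this count into `μ_X(B(x, δ)) ≤ 3 δ^m`. By the layer-cake formula this ball bound gives
`∫ exp(-s|x - y|²) dμ_X(x) ≤ 3 Γ(σ + 1) s^(-σ)` for every `y`. For a coupling `P` with
`∫ |x - y|² dP ≤ D`, the Donsker–Varadhan inequality with test function `-s|x - y|²`,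
`s = σ/D`, bounds `I(P)` below by `-σ - log (3 Γ(σ + 1) s^(-σ))`.
-/

open MeasureTheory Real Set
open scoped ENNReal NNReal Classical Pointwise

/-- Left endpoints of the `2 ^ k` intervals of length `3⁻ᵏ` in the `k`-th step of the
construction of the Cantor set. -/
noncomputable def cantorPoints : ℕ → Finset ℝ
  | 0 => {0}
  | k + 1 => (cantorPoints k).image (· / 3) ∪ (cantorPoints k).image (· / 3 + 2 / 3)

lemma mem_cantorPoints_succ {k : ℕ} {b : ℝ} :
    b ∈ cantorPoints (k + 1) ↔ ∃ a ∈ cantorPoints k, b = a / 3 ∨ b = a / 3 + 2 / 3 := by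
  simp only [cantorPoints, Finset.mem_union, Finset.mem_image]
  grind

lemma cantorPoints_bounds {k : ℕ} {a : ℝ} (ha : a ∈ cantorPoints k) :
    0 ≤ a ∧ a + (1 / 3) ^ k ≤ 1 := by
  induction k generalizing a with
  | zero => simp_all [cantorPoints]
  | succ k ih =>
    obtain ⟨b, hb, rfl | rfl⟩ := mem_cantorPoints_succ.1 ha <;>
      obtain ⟨h0, h1⟩ := ih hb <;> rw [pow_succ] <;> constructor <;> linarith

lemma add_le_of_mem_cantorPoints {k : ℕ} {a b : ℝ} (ha : a ∈ cantorPoints k)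
    (hb : b ∈ cantorPoints k) (hab : a < b) : a + 2 * (1 / 3) ^ k ≤ b := by
  induction k generalizing a b with
  | zero => simp_all [cantorPoints]
  | succ k ih =>
    rw [pow_succ]
    obtain ⟨a', ha', rfl | rfl⟩ := mem_cantorPoints_succ.1 ha <;>
      obtain ⟨b', hb', rfl | rfl⟩ := mem_cantorPoints_succ.1 hb <;>
      have := cantorPoints_bounds ha' <;> have := cantorPoints_bounds hb'
    · linarith [ih ha' hb' (by linarith)]
    · linarith [pow_le_one₀ (n := k) (by norm_num : (0 : ℝ) ≤ 1 / 3) (by norm_num)]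
    · linarith [pow_pos (by norm_num : (0 : ℝ) < 1 / 3) k]
    · linarith [ih ha' hb' (by linarith)]

lemma Finset.card_mul_le_of_separated {S : Finset ℝ} {g L R : ℝ} (hg : 0 ≤ g) (hLR : L ≤ R)
    (hsep : ∀ a ∈ S, ∀ b ∈ S, a < b → a + g ≤ b) (hS : ∀ a ∈ S, a ∈ Set.Icc L R) :
    S.card * g ≤ R - L + g := by
  have hdisj : (S : Set ℝ).PairwiseDisjoint fun a => Set.Ico a (a + g) := by
    intro a ha b hb hab
    refine Set.disjoint_left.2 fun z hza hzb => ?_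
    rcases hab.lt_or_gt with h | h
    · linarith [hsep a ha b hb h, hza.2, hzb.1]
    · linarith [hsep b hb a ha h, hza.1, hzb.2]
  have hsub : (⋃ a ∈ S, Set.Ico a (a + g)) ⊆ Set.Ico L (R + g) := iUnion₂_subset fun a ha =>
    Set.Ico_subset_Ico (hS a ha).1 (by linarith [(hS a ha).2])
  have := (measure_biUnion_finset hdisj fun a _ => measurableSet_Ico).symm.trans_le
    (measure_mono (μ := volume) hsub)
  simp only [Real.volume_Ico, add_sub_cancel_left, Finset.sum_const, nsmul_eq_mul] at this
  rw [← ENNReal.ofReal_natCast, ← ENNReal.ofReal_mul (by positivity),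
    ENNReal.ofReal_le_ofReal_iff (by linarith)] at this
  linarith

lemma hausdorffMeasure_affine_image {d : ℝ} (hd : 0 ≤ d) {u : ℝ} (hu : 0 < u) (a : ℝ) (s : Set ℝ) :
    μH[d] ((fun z => u * z + a) '' s) = ENNReal.ofReal (u ^ d) * μH[d] s := by
  have : (fun z => u * z + a) '' s = (IsometryEquiv.addRight a) '' (u • s) := by
    rw [← image_smul, image_image]; rfl
  rw [this, IsometryEquiv.hausdorffMeasure_image, Measure.hausdorffMeasure_smul₀ hd hu.ne',
    ← ENNReal.ofReal_rpow_of_nonneg hu.le hd, ENNReal.smul_def, ENNReal.coe_rpow_of_nonneg _ hd,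
    Real.nnnorm_of_nonneg hu.le, smul_eq_mul, ENNReal.ofReal_eq_coe_nnreal hu.le]

lemma mem_Icc_of_three_rpow_eq_two {m : ℝ} (h3m : (3 : ℝ) ^ m = 2) : m ∈ Icc 0 1 := by
  constructor
  · by_contra! h
    linarith [Real.rpow_lt_one_of_one_lt_of_neg (by norm_num : (1 : ℝ) < 3) h]
  · by_contra! h
    linarith [Real.rpow_lt_rpow_of_exponent_lt (by norm_num : (1 : ℝ) < 3) h, Real.rpow_one 3]

lemma add_one_div_two_le_rpow {m t : ℝ} (h3m : (3 : ℝ) ^ m = 2) (ht1 : 1 ≤ t) (ht3 : t ≤ 3) :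
    (t + 1) / 2 ≤ t ^ m := by
  obtain ⟨hm0, hm1⟩ := mem_Icc_of_three_rpow_eq_two h3m
  have := (Real.concaveOn_rpow hm0 hm1).2 (mem_Ici.2 zero_le_one) (mem_Ici.2 zero_le_three)
    (show 0 ≤ (3 - t) / 2 by linarith) (show 0 ≤ (t - 1) / 2 by linarith) (by ring)
  simp only [smul_eq_mul, Real.one_rpow, h3m] at this
  rw [show (3 - t) / 2 * 1 + (t - 1) / 2 * 3 = t by ring] at this
  linarith

lemma natCast_mul_rpow_le {m u δ : ℝ} {n : ℕ} (h3m : (3 : ℝ) ^ m = 2) (hu : 0 < u)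
    (huδ : u ≤ δ) (hδu : δ ≤ 3 * u) (hn : n * (2 * u) ≤ 2 * δ + 3 * u) :
    n * u ^ m ≤ 3 * δ ^ m := by
  obtain ⟨t, rfl⟩ : ∃ t, δ = t * u := ⟨δ / u, by field_simp⟩
  have ht1 : 1 ≤ t := by nlinarith
  have ht := add_one_div_two_le_rpow h3m ht1 (by nlinarith)
  have hnt : (n : ℝ) ≤ t + 3 / 2 := by nlinarith
  rw [Real.mul_rpow (by linarith) hu.le]
  nlinarith [Real.rpow_pos_of_pos hu m]

def IsMiddleThirdSelfSimilar (C : Set ℝ) : Prop :=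
  C = (fun y => (1 / 3 : ℝ) * y) '' C ∪ (fun y => (1 / 3 : ℝ) * y + 2 / 3) '' C

namespace IsMiddleThirdSelfSimilar

variable {C : Set ℝ}

lemma exists_eq_of_mem (hC : IsMiddleThirdSelfSimilar C) {y : ℝ} (hy : y ∈ C) :
    ∃ z ∈ C, y = z / 3 ∨ y = z / 3 + 2 / 3 := by
  rw [hC] at hy
  rcases hy with ⟨z, hz, rfl⟩ | ⟨z, hz, rfl⟩
  · exact ⟨z, hz, Or.inl (by ring)⟩
  · exact ⟨z, hz, Or.inr (by ring)⟩

lemma subset_Icc (hC : IsMiddleThirdSelfSimilar C) (hCc : IsCompact C) : C ⊆ Icc 0 1 := by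
  rcases C.eq_empty_or_nonempty with rfl | hne
  · exact empty_subset _
  have hsup : sSup C ≤ sSup C / 3 + 2 / 3 := csSup_le hne fun y hy => by
    obtain ⟨z, hz, rfl | rfl⟩ := hC.exists_eq_of_mem hy <;>
      linarith [le_csSup hCc.bddAbove hz, le_csSup hCc.bddAbove hy]
  have hinf : sInf C / 3 ≤ sInf C := le_csInf hne fun y hy => by
    obtain ⟨z, hz, rfl | rfl⟩ := hC.exists_eq_of_mem hy <;>
      linarith [csInf_le hCc.bddBelow hz, csInf_le hCc.bddBelow hy]
  exact fun y hy =>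
    ⟨by linarith [csInf_le hCc.bddBelow hy], by linarith [le_csSup hCc.bddAbove hy]⟩

lemma exists_cantorPoints_eq (hC : IsMiddleThirdSelfSimilar C) (k : ℕ) {y : ℝ} (hy : y ∈ C) :
    ∃ a ∈ cantorPoints k, ∃ z ∈ C, y = (1 / 3) ^ k * z + a := by
  induction k generalizing y with
  | zero => exact ⟨0, by simp [cantorPoints], y, hy, by ring⟩
  | succ k ih =>
    obtain ⟨y', hy', rfl | rfl⟩ := hC.exists_eq_of_mem hy <;>
      obtain ⟨a, ha, z, hz, rfl⟩ := ih hy'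
    · exact ⟨a / 3, mem_cantorPoints_succ.2 ⟨a, ha, Or.inl rfl⟩, z, hz, by ring⟩
    · exact ⟨a / 3 + 2 / 3, mem_cantorPoints_succ.2 ⟨a, ha, Or.inr rfl⟩, z, hz, by ring⟩

lemma inter_ball_subset_biUnion (hC : IsMiddleThirdSelfSimilar C) (hCc : IsCompact C)
    (k : ℕ) (x δ : ℝ) :
    C ∩ Metric.ball x δ ⊆ ⋃ a ∈ (cantorPoints k).filter
      (fun a => x - δ - (1 / 3) ^ k < a ∧ a < x + δ), (fun z => (1 / 3) ^ k * z + a) '' C := by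
  rintro y ⟨hy, hyx⟩
  obtain ⟨a, ha, z, hz, rfl⟩ := hC.exists_cantorPoints_eq k hy
  obtain ⟨hz0, hz1⟩ := hC.subset_Icc hCc hz
  rw [Metric.mem_ball, Real.dist_eq, abs_lt] at hyx
  have hu : (0 : ℝ) < (1 / 3) ^ k := by positivity
  exact mem_biUnion (Finset.mem_filter.2 ⟨ha, by constructor <;> nlinarith⟩) ⟨z, hz, rfl⟩

lemma hausdorffMeasure_inter_ball_le (hC : IsMiddleThirdSelfSimilar C) (hCc : IsCompact C)
    {m : ℝ} (h3m : (3 : ℝ) ^ m = 2) (x : ℝ) {δ : ℝ} (hδ : 0 < δ) :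
    μH[m] (C ∩ Metric.ball x δ) ≤ ENNReal.ofReal (3 * δ ^ m) * μH[m] C := by
  have hm0 := (mem_Icc_of_three_rpow_eq_two h3m).1
  rcases lt_or_ge 1 δ with hδ1 | hδ1
  · calc μH[m] (C ∩ Metric.ball x δ) ≤ 1 * μH[m] C := by
          rw [one_mul]; exact measure_mono inter_subset_left
      _ ≤ _ := by
          gcongr
          exact ENNReal.one_le_ofReal.2 (by linarith [Real.one_le_rpow hδ1.le hm0])
  obtain ⟨k, hk1, hk2⟩ := exists_nat_pow_near (one_le_one_div hδ hδ1) (by norm_num : (1 : ℝ) < 3)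
  set u : ℝ := (1 / 3) ^ (k + 1) with hu_def
  have hu : 0 < u := by positivity
  have huδ : u < δ := by
    rw [hu_def, one_div_pow, one_div_lt (by positivity) hδ]; exact hk2
  have hδu : δ ≤ 3 * u := by
    rw [show 3 * u = 1 / 3 ^ k by rw [hu_def, pow_succ, one_div_pow]; ring,
      le_one_div hδ (by positivity)]
    exact hk1
  set S := (cantorPoints (k + 1)).filter (fun a => x - δ - u < a ∧ a < x + δ)
  have hcard : (S.card : ℝ) * (2 * u) ≤ 2 * δ + 3 * u := by
    have := Finset.card_mul_le_of_separated (S := S) (by positivity) (by linarith)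
      (fun a ha b hb hab => add_le_of_mem_cantorPoints (Finset.mem_filter.1 ha).1
        (Finset.mem_filter.1 hb).1 hab)
      (fun a ha => ⟨(Finset.mem_filter.1 ha).2.1.le, (Finset.mem_filter.1 ha).2.2.le⟩)
    linarith
  calc μH[m] (C ∩ Metric.ball x δ) ≤ ∑ a ∈ S, μH[m] ((fun z => u * z + a) '' C) :=
        (measure_mono (hC.inter_ball_subset_biUnion hCc (k + 1) x δ)).trans
          (measure_biUnion_finset_le _ _)
    _ = ENNReal.ofReal (S.card * u ^ m) * μH[m] C := by
        rw [Finset.sum_congr rfl fun a _ => hausdorffMeasure_affine_image hm0 hu a C,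
          Finset.sum_const, nsmul_eq_mul, ENNReal.ofReal_mul (Nat.cast_nonneg _),
          ENNReal.ofReal_natCast, mul_assoc]
    _ ≤ ENNReal.ofReal (3 * δ ^ m) * μH[m] C :=
        mul_le_mul_left (ENNReal.ofReal_le_ofReal (natCast_mul_rpow_le h3m hu huδ.le hδu hcard)) _

end IsMiddleThirdSelfSimilar

lemma lintegral_exp_neg_eq_lintegral_measure_lt {α : Type*} [MeasurableSpace α] (μ : Measure α)
    [SFinite μ] {f : α → ℝ} (hf : Measurable f) (hf0 : 0 ≤ f) :
    ∫⁻ x, ENNReal.ofReal (exp (-f x)) ∂μ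
      = ∫⁻ u in Ioi 0, μ {x | f x < u} * ENNReal.ofReal (exp (-u)) := by
  set F : α → ℝ → ℝ≥0∞ := fun x u => if f x < u then ENNReal.ofReal (exp (-u)) else 0
  have hF : Measurable (Function.uncurry F) :=
    Measurable.ite (measurableSet_lt (hf.comp measurable_fst) measurable_snd) (by fun_prop)
      measurable_const
  -- `exp (-a) = ∫_{u > a} exp (-u) du`
  have hlayer (x : α) : ∫⁻ u in Ioi 0, F x u = ENNReal.ofReal (exp (-f x)) := by
    have hF_ind : F x = (Ioi (f x)).indicator fun u => ENNReal.ofReal (exp (-u)) := by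
      ext u; simp [F, indicator_apply]
    rw [hF_ind, lintegral_indicator measurableSet_Ioi, Measure.restrict_restrict measurableSet_Ioi,
      inter_eq_left.2 (Ioi_subset_Ioi (show (0 : ℝ) ≤ f x from hf0 x)),
      ← ofReal_integral_eq_lintegral_ofReal
        (by simpa using (exp_neg_integrableOn_Ioi (f x) zero_lt_one).integrable)
        (ae_of_all _ fun u => (exp_pos _).le), integral_exp_neg_Ioi]
  have hslice (u : ℝ) : ∫⁻ x, F x u ∂μ = μ {x | f x < u} * ENNReal.ofReal (exp (-u)) := by
    have hF_ind : (F · u) = {x | f x < u}.indicator fun _ => ENNReal.ofReal (exp (-u)) := by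
      ext x; simp [F, indicator_apply]
    rw [hF_ind, lintegral_indicator_const (measurableSet_lt hf measurable_const), mul_comm]
  simp_rw [← hlayer, ← hslice]
  exact lintegral_lintegral_swap hF.aemeasurable

lemma lintegral_rpow_mul_exp_neg {c σ s : ℝ} (hc : 0 ≤ c) (hσ : 0 < σ) (hs : 0 < s) :
    ∫⁻ u in Ioi 0, ENNReal.ofReal (c * (u / s) ^ σ) * ENNReal.ofReal (exp (-u))
      = ENNReal.ofReal (c * Gamma (σ + 1) * s ^ (-σ)) := by
  have hGamma : IntegrableOn (fun u => exp (-u) * u ^ σ) (Ioi 0) := by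
    simpa using Real.GammaIntegral_convergent (s := σ + 1) (by linarith)
  have hpt : ∀ u ∈ Ioi (0 : ℝ), ENNReal.ofReal (c * (u / s) ^ σ) * ENNReal.ofReal (exp (-u))
      = ENNReal.ofReal (c * s ^ (-σ)) * ENNReal.ofReal (exp (-u) * u ^ σ) := by
    intro u (hu : 0 < u)
    rw [← ENNReal.ofReal_mul (by positivity), ← ENNReal.ofReal_mul (by positivity),
      Real.div_rpow hu.le hs.le, Real.rpow_neg hs.le]
    ring_nf
  rw [setLIntegral_congr_fun measurableSet_Ioi hpt, lintegral_const_mul' _ _ ENNReal.ofReal_ne_top,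
    ← ofReal_integral_eq_lintegral_ofReal hGamma (ae_restrict_of_forall_mem measurableSet_Ioi
      fun u (hu : 0 < u) => by positivity), ← ENNReal.ofReal_mul (by positivity),
    Real.Gamma_eq_integral (by linarith), add_sub_cancel_right]
  ring_nf

lemma lintegral_exp_neg_mul_sq_le {μ : Measure ℝ} [SFinite μ] {c σ : ℝ} (hc : 0 ≤ c) (hσ : 0 < σ)
    (hball : ∀ x r, 0 < r → μ (Metric.ball x r) ≤ ENNReal.ofReal (c * r ^ (2 * σ)))
    (y : ℝ) {s : ℝ} (hs : 0 < s) :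
    ∫⁻ x, ENNReal.ofReal (exp (-(s * (x - y) ^ 2))) ∂μ
      ≤ ENNReal.ofReal (c * Gamma (σ + 1) * s ^ (-σ)) := by
  have hsub (u : ℝ) (hu : 0 < u) :
      μ {x | s * (x - y) ^ 2 < u} ≤ ENNReal.ofReal (c * (u / s) ^ σ) := by
    have hset : {x | s * (x - y) ^ 2 < u} = Metric.ball y (√(u / s)) := by
      ext x
      rw [mem_ofPred_eq, Metric.mem_ball, Real.dist_eq, Real.lt_sqrt (abs_nonneg _), sq_abs,
        lt_div_iff₀ hs, mul_comm]
    refine (hset ▸ hball y _ (by positivity)).trans_eq ?_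
    rw [Real.sqrt_eq_rpow, ← Real.rpow_mul (by positivity)]
    congr 3
    ring
  rw [lintegral_exp_neg_eq_lintegral_measure_lt μ (by fun_prop) fun x => by positivity,
    ← lintegral_rpow_mul_exp_neg hc hσ hs]
  exact setLIntegral_mono' measurableSet_Ioi fun u hu => mul_le_mul_left (hsub u hu) _

lemma integral_exp_neg_mul_sq_prod_le {μ ν : Measure ℝ} [SFinite μ] [IsProbabilityMeasure ν]
    {c σ : ℝ} (hc : 0 ≤ c) (hσ : 0 < σ)
    (hball : ∀ x r, 0 < r → μ (Metric.ball x r) ≤ ENNReal.ofReal (c * r ^ (2 * σ)))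
    {s : ℝ} (hs : 0 < s) :
    ∫ p : ℝ × ℝ, exp (-(s * (p.1 - p.2) ^ 2)) ∂(μ.prod ν) ≤ c * Gamma (σ + 1) * s ^ (-σ) := by
  rw [integral_eq_lintegral_of_nonneg_ae (ae_of_all _ fun p => (exp_pos _).le)
    (by fun_prop)]
  refine ENNReal.toReal_le_of_le_ofReal (by positivity) ?_
  rw [lintegral_prod_symm _ (by fun_prop)]
  calc ∫⁻ y, ∫⁻ x, ENNReal.ofReal (exp (-(s * (x - y) ^ 2))) ∂μ ∂ν
      ≤ ∫⁻ _, ENNReal.ofReal (c * Gamma (σ + 1) * s ^ (-σ)) ∂ν :=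
        lintegral_mono fun y => lintegral_exp_neg_mul_sq_le hc hσ hball y hs
    _ = ENNReal.ofReal (c * Gamma (σ + 1) * s ^ (-σ)) := by simp

lemma integral_sub_log_integral_exp_le_integral_llr {α : Type*} [MeasurableSpace α]
    {μ ν : Measure α} [IsProbabilityMeasure μ] [IsProbabilityMeasure ν] (hμν : μ ≪ ν)
    (hllr : Integrable (llr μ ν) μ) {f : α → ℝ} (hfμ : Integrable f μ)
    (hfν : Integrable (fun x => exp (f x)) ν) :
    ∫ x, f x ∂μ - log (∫ x, exp (f x) ∂ν) ≤ ∫ x, llr μ ν x ∂μ := by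
  have := isProbabilityMeasure_tilted hfν
  have h := InformationTheory.integral_llr_add_sub_measure_univ_nonneg
    (hμν.trans (absolutelyContinuous_tilted hfν)) (integrable_llr_tilted_right hμν hfμ hllr hfν)
  rw [integral_llr_tilted_right hμν hfμ hfν hllr] at h
  simp only [probReal_univ] at h
  linarith

lemma le_integral_llr_of_measure_ball_le {P : Measure (ℝ × ℝ)} [IsProbabilityMeasure P]
    {c σ D : ℝ} (hc : 0 < c) (hσ : 0 < σ) (hD : 0 < D)
    (hball : ∀ x r, 0 < r → P.fst (Metric.ball x r) ≤ ENNReal.ofReal (c * r ^ (2 * σ)))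
    (hac : P ≪ P.fst.prod P.snd) (hllr : Integrable (llr P (P.fst.prod P.snd)) P)
    (hsq : Integrable (fun p : ℝ × ℝ => (p.1 - p.2) ^ 2) P)
    (hdist : ∫ p : ℝ × ℝ, (p.1 - p.2) ^ 2 ∂P ≤ D) :
    σ * log (σ / D) - σ - log (c * Gamma (σ + 1)) ≤ ∫ p, llr P (P.fst.prod P.snd) p ∂P := by
  set s := σ / D with hs_def
  have hs : 0 < s := div_pos hσ hD
  have hexp : Integrable (fun p : ℝ × ℝ => exp (-(s * (p.1 - p.2) ^ 2))) (P.fst.prod P.snd) :=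
    Integrable.mono' (integrable_const 1) (by fun_prop) (ae_of_all _ fun p => by
      rw [norm_of_nonneg (exp_pos _).le, exp_le_one_iff, neg_nonpos]; positivity)
  have hZ := integral_exp_neg_mul_sq_prod_le hc.le hσ hball hs (ν := P.snd)
  have hlogZ : log (∫ p : ℝ × ℝ, exp (-(s * (p.1 - p.2) ^ 2)) ∂(P.fst.prod P.snd))
      ≤ log (c * Gamma (σ + 1)) - σ * log s := by
    refine (log_le_log (integral_exp_pos hexp) hZ).trans_eq ?_
    rw [log_mul (by positivity) (by positivity), log_rpow hs]
    ring
  have hgibbs := integral_sub_log_integral_exp_le_integral_llr hac hllr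
    (f := fun p => -(s * (p.1 - p.2) ^ 2)) (hsq.const_mul s).neg hexp
  rw [integral_neg, integral_const_mul] at hgibbs
  have hsD : s * D = σ := by rw [hs_def]; field_simp
  linarith [mul_le_mul_of_nonneg_left hdist hs.le]

theorem le_RD_of_measure_ball_le (μX : Measure ℝ) {c σ D : ℝ} (hc : 0 < c) (hσ : 0 < σ)
    (hD : 0 < D)
    (hball : ∀ x r, 0 < r → μX (Metric.ball x r) ≤ ENNReal.ofReal (c * r ^ (2 * σ))) :
    ((σ * log (σ / D) - σ - log (c * Gamma (σ + 1)) : ℝ) : EReal)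
      ≤ RD μX (fun x y => ENNReal.ofReal ((x - y) ^ 2)) D := by
  refine le_iInf fun P => le_iInf fun hP => le_iInf fun hfst => le_iInf fun hdist => ?_
  subst hfst
  rw [mutualInfo]
  split_ifs with h
  · obtain ⟨hac, hllr⟩ := h
    have hsq0 : 0 ≤ᵐ[P] fun p : ℝ × ℝ => (p.1 - p.2) ^ 2 := ae_of_all _ fun p => sq_nonneg _
    have hsq : Integrable (fun p : ℝ × ℝ => (p.1 - p.2) ^ 2) P :=
      ⟨by fun_prop, (hasFiniteIntegral_iff_ofReal hsq0).2 (hdist.trans_lt ENNReal.ofReal_lt_top)⟩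
    have hdist' : ∫ p : ℝ × ℝ, (p.1 - p.2) ^ 2 ∂P ≤ D := by
      rw [integral_eq_lintegral_of_nonneg_ae hsq0 hsq.1]
      exact ENNReal.toReal_le_of_le_ofReal hD.le hdist
    exact EReal.coe_le_coe_iff.2
      (le_integral_llr_of_measure_ball_le hc hσ hD hball hac hllr hsq hdist')
  · exact le_top

theorem stmt17_general
    (C : Set ℝ) (hCcompact : IsCompact C)
    (hC : C = (fun y => (1 / 3 : ℝ) * y) '' C ∪ (fun y => (1 / 3 : ℝ) * y + 2 / 3) '' C)
    (m : ℝ) (hm : m = Real.log 2 / Real.log 3)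
    (hHpos : 0 < μH[m] C) (hHfin : μH[m] C < ⊤)
    (μX : Measure ℝ) (hμX : μX = (μH[m] C)⁻¹ • (μH[m].restrict C))
    (ρ : ℝ → ℝ → ℝ≥0∞) (hρ : ∀ x y : ℝ, ρ x y = ENNReal.ofReal ((x - y) ^ 2))
    (σ : ℝ) (hσ : σ = Real.log 2 / Real.log 9) :
    ∀ D : ℝ, 0 < D →
      RD μX ρ D ≥
        ((σ * Real.log (σ / D) - σ - Real.log (3 * Real.Gamma (σ + 1)) : ℝ) : EReal) := by
  intro D hD
  have hlog3 : 0 < log 3 := log_pos (by norm_num)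
  have h3m : (3 : ℝ) ^ m = 2 := by
    rw [hm, rpow_def_of_pos three_pos, mul_div_cancel₀ _ hlog3.ne', exp_log two_pos]
  have hmσ : m = 2 * σ := by
    rw [hm, hσ, show (9 : ℝ) = 3 ^ 2 by norm_num, log_pow]
    field_simp
    push_cast
    ring
  have hσ0 : 0 < σ := by rw [hσ]; exact div_pos (log_pos one_lt_two) (log_pos (by norm_num))
  obtain rfl : ρ = fun x y => ENNReal.ofReal ((x - y) ^ 2) := funext₂ hρ
  have hball (x r : ℝ) (hr : 0 < r) :
      μX (Metric.ball x r) ≤ ENNReal.ofReal (3 * r ^ (2 * σ)) := by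
    rw [hμX, ← hmσ, Measure.smul_apply, Measure.restrict_apply measurableSet_ball, smul_eq_mul,
      ENNReal.inv_mul_le_iff hHpos.ne' hHfin.ne, inter_comm, mul_comm]
    exact IsMiddleThirdSelfSimilar.hausdorffMeasure_inter_ball_le hC hCcompact h3m x hr
  exact le_RD_of_measure_ball_le μX three_pos hσ0 hD hball

/-- For `X` distributed uniformly on the middle third Cantor set `C`
(`μX = ℋ^m|_C / ℋ^m(C)` with `m = log 2 / log 3`) and squared-error distortion
`ρ(x,y) = |x − y|²`, the rate-distortion function satisfies
`R(D) ≥ σ log(σ/D) − σ − log(3 Γ(σ+1))` for all `D > 0`, where `σ = log 2 / log 9`. -/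
theorem stmt17
    (C : Set ℝ) (hCne : C.Nonempty) (hCcompact : IsCompact C)
    (hC : C = (fun y => (1 / 3 : ℝ) * y) '' C ∪ (fun y => (1 / 3 : ℝ) * y + 2 / 3) '' C)
    (m : ℝ) (hm : m = Real.log 2 / Real.log 3)
    (hHpos : 0 < μH[m] C) (hHfin : μH[m] C < ⊤)
    (μX : Measure ℝ) (hμX : μX = (μH[m] C)⁻¹ • (μH[m].restrict C))
    (ρ : ℝ → ℝ → ℝ≥0∞) (hρ : ∀ x y : ℝ, ρ x y = ENNReal.ofReal ((x - y) ^ 2))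
    (σ : ℝ) (hσ : σ = Real.log 2 / Real.log 9) :
    ∀ D : ℝ, 0 < D →
      RD μX ρ D ≥
        ((σ * Real.log (σ / D) - σ - Real.log (3 * Real.Gamma (σ + 1)) : ℝ) : EReal) :=
  stmt17_general C hCcompact hC m hm hHpos hHfin μX hμX ρ hρ σ hσ
end
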